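/- arXiv:1609.05630 — 9 statements merged into one kernel-verified Lean document; each statement's English description precedes it below -/
import Mathlib

section
/- Let G be the group with generators α_{n+1},…,α_{2n} and relations: for each pair n+1 ≤ p < q ≤ 2n, α_p α_q α_p^{-1} α_q^{-1} = 1 if c_{p-n,q-n} = 0, and α_p α_q^{-1} α_p^{-1} α_q^{-1} = 1 if c_{p-n,q-n} = 1, where c : Fin n × Fin n → ZMod 2 is any function. Then G is abelian if and only if c_{i,j} = 0 for all i < j. -/
/-!
If every `c (i, j)` with `i < j` vanishes, all relators are commutators of generators, so the
group is abelian. Conversely, if `c (p, q) ≠ 0` for some `p < q`, send `α_q` to a rotation `r 1` of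
the infinite dihedral group, every `α_k` with `k < q` and `c (k, q) ≠ 0` to the reflection `sr 0`,
and all other generators to `1`. Reflections invert rotations and commute with each other, so every
relator dies, while the images of `α_p` and `α_q` do not commute.
-/

/-- The relator set for the presentation of the fundamental group of a real
Bott tower: for each pair `p < q`, the relator is the commutator
`α_p α_q α_p⁻¹ α_q⁻¹` if `c (p,q) = 0`, and `α_p α_q⁻¹ α_p⁻¹ α_q⁻¹` if
`c (p,q) = 1`. -/
def bottRels (n : ℕ) (c : Fin n × Fin n → ZMod 2) : Set (FreeGroup (Fin n)) :=
  {w | ∃ p q : Fin n, p < q ∧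
    w = (if c (p, q) = 0 then
          FreeGroup.of p * FreeGroup.of q * (FreeGroup.of p)⁻¹ * (FreeGroup.of q)⁻¹
        else
          FreeGroup.of p * (FreeGroup.of q)⁻¹ * (FreeGroup.of p)⁻¹ * (FreeGroup.of q)⁻¹)}

open DihedralGroup

theorem PresentedGroup.mul_comm_of_commute_of {α : Type*} {rels : Set (FreeGroup α)}
    (h : ∀ x y : α, Commute (of (rels := rels) x) (of y)) (a b : PresentedGroup rels) :
    a * b = b * a := by
  have hcomm := Subgroup.isMulCommutative_closure (k := Set.range (of (rels := rels)))
    (by rintro _ ⟨x, rfl⟩ _ ⟨y, rfl⟩; exact h x y)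
  rw [closure_range_of] at hcomm
  exact congrArg Subtype.val
    (hcomm.is_comm.comm (⟨a, Subgroup.mem_top a⟩ : (⊤ : Subgroup _)) ⟨b, Subgroup.mem_top b⟩)

section Bott

variable {n : ℕ} {c : Fin n × Fin n → ZMod 2}

theorem lift_eq_one_of_mem_bottRels {G : Type*} [Group G] {f : Fin n → G}
    (h₀ : ∀ p q, p < q → c (p, q) = 0 → Commute (f p) (f q))
    (h₁ : ∀ p q, p < q → c (p, q) ≠ 0 → f p * (f q)⁻¹ * (f p)⁻¹ = f q) :
    ∀ r ∈ bottRels n c, FreeGroup.lift f r = 1 := by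
  rintro _ ⟨p, q, hpq, rfl⟩
  split_ifs with hc
  · rw [← commutatorElement_def, map_commutatorElement, FreeGroup.lift_apply_of,
      FreeGroup.lift_apply_of, commutatorElement_eq_one_iff_commute]
    exact h₀ p q hpq hc
  · simpa only [map_mul, map_inv, FreeGroup.lift_apply_of, mul_inv_eq_one] using h₁ p q hpq hc

theorem commute_of_bottRels (h : ∀ i j : Fin n, i < j → c (i, j) = 0) (p q : Fin n) :
    Commute (PresentedGroup.of (rels := bottRels n c) p) (PresentedGroup.of q) := by
  wlog hpq : p < q generalizing p q
  · rcases (not_lt.1 hpq).eq_or_lt with rfl | hqp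
    · exact Commute.refl _
    · exact (this q p hqp).symm
  have hrel : PresentedGroup.mk (bottRels n c)
      (FreeGroup.of p * FreeGroup.of q * (FreeGroup.of p)⁻¹ * (FreeGroup.of q)⁻¹) = 1 :=
    PresentedGroup.one_of_mem ⟨p, q, hpq, by rw [if_pos (h p q hpq)]⟩
  rwa [← commutatorElement_def, map_commutatorElement,
    commutatorElement_eq_one_iff_commute] at hrel

variable (c) in
def bottDihedralMap (q : Fin n) (k : Fin n) : DihedralGroup 0 :=
  if k = q then r 1 else if k < q ∧ c (k, q) ≠ 0 then sr 0 else 1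

theorem bottDihedralMap_self (q : Fin n) : bottDihedralMap c q q = r 1 := if_pos rfl

theorem bottDihedralMap_of_lt {p q : Fin n} (hpq : p < q) (hc : c (p, q) ≠ 0) :
    bottDihedralMap c q p = sr 0 := by
  rw [bottDihedralMap, if_neg hpq.ne, if_pos ⟨hpq, hc⟩]

theorem bottDihedralMap_of_lt_of_eq_zero {p q : Fin n} (hpq : p < q) (hc : c (p, q) = 0) :
    bottDihedralMap c q p = 1 := by
  rw [bottDihedralMap, if_neg hpq.ne, if_neg (fun h ↦ h.2 hc)]

theorem bottDihedralMap_of_gt {p q : Fin n} (hqp : q < p) : bottDihedralMap c q p = 1 := by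
  rw [bottDihedralMap, if_neg hqp.ne', if_neg (fun h ↦ h.1.not_gt hqp)]

theorem bottDihedralMap_of_ne {k q : Fin n} (hkq : k ≠ q) :
    bottDihedralMap c q k = 1 ∨ bottDihedralMap c q k = sr 0 := by
  unfold bottDihedralMap
  rw [if_neg hkq]
  split_ifs <;> simp

theorem lift_bottDihedralMap_eq_one (q : Fin n) :
    ∀ r ∈ bottRels n c, FreeGroup.lift (bottDihedralMap c q) r = 1 := by
  refine lift_eq_one_of_mem_bottRels (fun a b hab hc ↦ ?_) (fun a b hab hc ↦ ?_)
  · rcases eq_or_ne b q with rfl | hb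
    · rw [bottDihedralMap_of_lt_of_eq_zero hab hc]; exact Commute.one_left _
    rcases eq_or_ne a q with rfl | ha
    · rw [bottDihedralMap_of_gt hab]; exact Commute.one_right _
    rcases bottDihedralMap_of_ne (c := c) ha with hfa | hfa <;>
      rcases bottDihedralMap_of_ne (c := c) hb with hfb | hfb <;>
      rw [hfa, hfb] <;> simp
  · rcases eq_or_ne b q with rfl | hb
    · rw [bottDihedralMap_of_lt hab hc, bottDihedralMap_self]; decide
    rcases eq_or_ne a q with rfl | ha
    · rw [bottDihedralMap_of_gt hab]; group
    rcases bottDihedralMap_of_ne (c := c) ha with hfa | hfa <;>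
      rcases bottDihedralMap_of_ne (c := c) hb with hfb | hfb <;>
      rw [hfa, hfb] <;> decide

theorem not_commute_of_bottRels {p q : Fin n} (hpq : p < q) (hc : c (p, q) ≠ 0) :
    ¬Commute (PresentedGroup.of (rels := bottRels n c) p) (PresentedGroup.of q) := by
  intro h
  have himage := congrArg (PresentedGroup.toGroup (lift_bottDihedralMap_eq_one q)) h.eq
  simp only [map_mul, PresentedGroup.toGroup.of, bottDihedralMap_of_lt hpq hc,
    bottDihedralMap_self] at himage
  exact absurd himage (by decide)

end Bott

theorem stmt_0_general (n : ℕ) (c : Fin n × Fin n → ZMod 2) :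
    (∀ a b : PresentedGroup (bottRels n c), a * b = b * a) ↔
      (∀ i j : Fin n, i < j → c (i, j) = 0) := by
  refine ⟨fun hcomm i j hij ↦ ?_, fun h ↦ PresentedGroup.mul_comm_of_commute_of
    (commute_of_bottRels h)⟩
  by_contra hc
  exact not_commute_of_bottRels hij hc (hcomm _ _)

theorem stmt_0 (n : ℕ) (hn : 1 ≤ n) (c : Fin n × Fin n → ZMod 2) :
    (∀ a b : PresentedGroup (bottRels n c), a * b = b * a) ↔
      (∀ i j : Fin n, i < j → c (i, j) = 0) :=
  stmt_0_general n c
end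

section
/- In the right-angled Coxeter group W with generators s_1,…,s_{2n}, relations s_j^2 = 1 for all j and (s_i s_j)^2 = 1 for all i < j with j ≠ i + n, the commutator subgroup [W,W] is abelian. -/
/-- Relators of the right-angled Coxeter group associated to the fan of an
`n`-step Bott tower: `s_j ^ 2` for all `j`, and `(s_i s_j) ^ 2` for all
`i < j` with `j ≠ i + n`. -/
def coxeterRels (n : ℕ) : Set (FreeGroup (Fin (2 * n))) :=
  {w | (∃ j : Fin (2 * n), w = (FreeGroup.of j) ^ 2) ∨
    (∃ i j : Fin (2 * n), i < j ∧ j.val ≠ i.val + n ∧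
      w = (FreeGroup.of i * FreeGroup.of j) ^ 2)}

/-!
The generators of `W` are involutions, and each `s_i` fails to commute with at most one other
generator, namely `s_{i ± n}`. In any group generated by such involutions, let `A` be the subgroup
generated by the commutators `⁅s_i, s_j⁆` of generators. Conjugating `⁅s_i, s_j⁆` by `s_i` or `s_j`
gives `⁅s_j, s_i⁆`, and any other generator commutes with both `s_i` and `s_j` unless
`⁅s_i, s_j⁆ = 1`; so `A` is normal, and as the images of the generators commute modulo `A`, it
contains `[W, W]`. Two nontrivial commutators `⁅s_i, s_j⁆`, `⁅s_k, s_l⁆` either come from the same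
pair `{i, j} = {k, l}`, or else `s_k, s_l` commute with `s_i, s_j`; hence `A` is abelian.
-/

open scoped commutatorElement

section Involutions

variable {G : Type*} [Group G]

namespace Subgroup

theorem closure_normal_of_conj_mem {S T : Set G} (hS : closure S = ⊤)
    (hS_inv : ∀ a ∈ S, a⁻¹ ∈ S) (hconj : ∀ a ∈ S, ∀ t ∈ T, a * t * a⁻¹ ∈ closure T) :
    (closure T).Normal := by
  have hmaps (a : G) (ha : a ∈ S) : closure T ≤ (closure T).comap (MulAut.conj a).toMonoidHom :=
    (closure_le _).2 fun t ht ↦ hconj a ha t ht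
  rw [← normalizer_eq_top_iff, eq_top_iff, ← hS, closure_le]
  intro a ha
  refine mem_normalizer_iff.2 fun h ↦ ⟨fun hh ↦ hmaps a ha hh, fun hh ↦ ?_⟩
  simpa [mul_assoc] using hmaps a⁻¹ (hS_inv a ha) hh

theorem commutator_le_of_commutatorElement_mem {S : Set G} (hS : closure S = ⊤)
    {N : Subgroup G} [N.Normal] (h : ∀ a ∈ S, ∀ b ∈ S, ⁅a, b⁆ ∈ N) : _root_.commutator G ≤ N := by
  have hS' : closure (QuotientGroup.mk' N '' S) = ⊤ := by
    rw [← MonoidHom.map_closure, hS, map_top_of_surjective _ (QuotientGroup.mk'_surjective N)]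
  have := isMulCommutative_closure (k := QuotientGroup.mk' N '' S) <| by
    rintro _ ⟨a, ha, rfl⟩ _ ⟨b, hb, rfl⟩
    rw [← commutatorElement_eq_one_iff_mul_comm, ← map_commutatorElement, QuotientGroup.mk'_apply,
      QuotientGroup.eq_one_iff]
    exact h a ha b hb
  refine Normal.quotient_commutative_iff_commutator_le.1 (isMulCommutative_iff.2 fun x y ↦ ?_)
  exact setLike_mul_comm (hS' ▸ mem_top x) (hS' ▸ mem_top y)

end Subgroup

theorem commute_of_mul_self_of_mul_mul_self {a b : G} (ha : a * a = 1) (hb : b * b = 1)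
    (hab : a * b * (a * b) = 1) : Commute a b := by
  have := inv_eq_of_mul_eq_one_right hab
  rwa [mul_inv_rev, inv_eq_of_mul_eq_one_right ha, inv_eq_of_mul_eq_one_right hb, eq_comm] at this

theorem Commute.commutatorElement_right {a x y : G} (hx : Commute a x) (hy : Commute a y) :
    Commute a ⁅x, y⁆ := by
  rw [commutatorElement_def]
  exact ((hx.mul_right hy).mul_right hx.inv_right).mul_right hy.inv_right

theorem conj_commutatorElement_of_mul_self_left {a b : G} (ha : a * a = 1) (hb : b * b = 1) :
    a * ⁅a, b⁆ * a⁻¹ = ⁅b, a⁆ := by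
  rw [commutatorElement_def, commutatorElement_def, inv_eq_of_mul_eq_one_right ha,
    inv_eq_of_mul_eq_one_right hb]
  simp only [← mul_assoc, ha, one_mul]

theorem conj_commutatorElement_of_mul_self_right {a b : G} (ha : a * a = 1) (hb : b * b = 1) :
    b * ⁅a, b⁆ * b⁻¹ = ⁅b, a⁆ := by
  rw [commutatorElement_def, commutatorElement_def, inv_eq_of_mul_eq_one_right ha,
    inv_eq_of_mul_eq_one_right hb]
  simp only [mul_assoc, hb, mul_one]

def AtMostOneNoncommuting {ι : Type*} (s : ι → G) : Prop :=
  ∀ i j k, ¬Commute (s i) (s j) → ¬Commute (s i) (s k) → j = k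

namespace AtMostOneNoncommuting

variable {ι : Type*} {s : ι → G} (hpartner : AtMostOneNoncommuting s)
include hpartner

theorem conj_commutatorElement_mem_closure (hinv : ∀ i, s i * s i = 1) (i j k : ι) :
    s k * ⁅s i, s j⁆ * (s k)⁻¹ ∈ Subgroup.closure (Set.range fun p : ι × ι ↦ ⁅s p.1, s p.2⁆) := by
  by_cases hij : Commute (s i) (s j)
  · simp [commutatorElement_eq_one_iff_commute.2 hij]
  by_cases hki : Commute (s k) (s i)
  · by_cases hkj : Commute (s k) (s j)
    · rw [(hki.commutatorElement_right hkj).eq, mul_inv_cancel_right]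
      exact Subgroup.subset_closure ⟨(i, j), rfl⟩
    · obtain rfl : i = k := hpartner j i k (fun h ↦ hij h.symm) (fun h ↦ hkj h.symm)
      rw [conj_commutatorElement_of_mul_self_left (hinv i) (hinv j)]
      exact Subgroup.subset_closure ⟨(j, i), rfl⟩
  · obtain rfl : j = k := hpartner i j k hij (fun h ↦ hki h.symm)
    rw [conj_commutatorElement_of_mul_self_right (hinv i) (hinv j)]
    exact Subgroup.subset_closure ⟨(j, i), rfl⟩

theorem commute_commutatorElement (i j k l : ι) : Commute ⁅s i, s j⁆ ⁅s k, s l⁆ := by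
  by_cases hij : Commute (s i) (s j)
  · simp [commutatorElement_eq_one_iff_commute.2 hij]
  by_cases hkl : Commute (s k) (s l)
  · simp [commutatorElement_eq_one_iff_commute.2 hkl]
  have hswap : Commute ⁅s i, s j⁆ ⁅s j, s i⁆ := by
    rw [← commutatorElement_inv (s i) (s j)]
    exact (Commute.refl _).inv_right
  by_cases hki : Commute (s k) (s i)
  swap
  · obtain rfl : j = k := hpartner i j k hij fun h ↦ hki h.symm
    obtain rfl : l = i := hpartner j l i hkl fun h ↦ hij h.symm
    exact hswap
  by_cases hkj : Commute (s k) (s j)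
  swap
  · obtain rfl : i = k := hpartner j i k (fun h ↦ hij h.symm) fun h ↦ hkj h.symm
    obtain rfl : l = j := hpartner i l j hkl hij
    rfl
  by_cases hli : Commute (s l) (s i)
  swap
  · obtain rfl : j = l := hpartner i j l hij fun h ↦ hli h.symm
    obtain rfl : k = i := hpartner j k i (fun h ↦ hkl h.symm) fun h ↦ hij h.symm
    rfl
  by_cases hlj : Commute (s l) (s j)
  swap
  · obtain rfl : i = l := hpartner j i l (fun h ↦ hij h.symm) fun h ↦ hlj h.symm
    obtain rfl : k = j := hpartner i k j (fun h ↦ hkl h.symm) hij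
    exact hswap
  exact (hki.commutatorElement_right hkj).symm.commutatorElement_right
    (hli.commutatorElement_right hlj).symm

theorem commute_of_mem_commutator (hinv : ∀ i, s i * s i = 1)
    (hgen : Subgroup.closure (Set.range s) = ⊤) {x y : G} (hx : x ∈ commutator G)
    (hy : y ∈ commutator G) : Commute x y := by
  set A := Subgroup.closure (Set.range fun p : ι × ι ↦ ⁅s p.1, s p.2⁆)
  have : A.Normal := by
    refine Subgroup.closure_normal_of_conj_mem hgen ?_ ?_
    · rintro _ ⟨i, rfl⟩
      exact ⟨i, (inv_eq_of_mul_eq_one_right (hinv i)).symm⟩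
    · rintro _ ⟨k, rfl⟩ _ ⟨⟨i, j⟩, rfl⟩
      exact hpartner.conj_commutatorElement_mem_closure hinv i j k
  have hle : commutator G ≤ A := by
    refine Subgroup.commutator_le_of_commutatorElement_mem hgen ?_
    rintro _ ⟨i, rfl⟩ _ ⟨j, rfl⟩
    exact Subgroup.subset_closure ⟨(i, j), rfl⟩
  have : IsMulCommutative A := Subgroup.isMulCommutative_closure <| by
    rintro _ ⟨⟨i, j⟩, rfl⟩ _ ⟨⟨k, l⟩, rfl⟩
    exact (hpartner.commute_commutatorElement i j k l).eq
  exact setLike_mul_comm (hle hx) (hle hy)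

end AtMostOneNoncommuting

end Involutions

namespace coxeterRels

abbrev W (n : ℕ) : Type := PresentedGroup (coxeterRels n)

variable {n : ℕ}

theorem of_mul_self (j : Fin (2 * n)) :
    (PresentedGroup.of j : W n) * PresentedGroup.of j = 1 := by
  simpa [pow_two, PresentedGroup.of] using
    PresentedGroup.one_of_mem (rels := coxeterRels n) (Or.inl ⟨j, rfl⟩)

theorem commute_of_lt {i j : Fin (2 * n)} (hij : i < j) (hpair : j.val ≠ i.val + n) :
    Commute (PresentedGroup.of i : W n) (PresentedGroup.of j) :=
  commute_of_mul_self_of_mul_mul_self (of_mul_self i) (of_mul_self j) <| by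
    simpa [pow_two, PresentedGroup.of] using
      PresentedGroup.one_of_mem (rels := coxeterRels n) (Or.inr ⟨i, j, hij, hpair, rfl⟩)

theorem commute_of {i j : Fin (2 * n)} (hij : j.val ≠ i.val + n) (hji : i.val ≠ j.val + n) :
    Commute (PresentedGroup.of i : W n) (PresentedGroup.of j) := by
  rcases lt_trichotomy i j with h | rfl | h
  · exact commute_of_lt h hij
  · rfl
  · exact (commute_of_lt h hji).symm

theorem atMostOneNoncommuting_of :
    AtMostOneNoncommuting (PresentedGroup.of : Fin (2 * n) → W n) := by
  intro i j k hj hk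
  have paired {l : Fin (2 * n)} (hl : ¬Commute (PresentedGroup.of i : W n) (PresentedGroup.of l)) :
      l.val = i.val + n ∨ i.val = l.val + n := by
    by_contra h
    rw [not_or] at h
    exact hl (commute_of h.1 h.2)
  have hj' := paired hj
  have hk' := paired hk
  omega

end coxeterRels

theorem stmt_1 (n : ℕ) (x y : PresentedGroup (coxeterRels n))
    (hx : x ∈ commutator (PresentedGroup (coxeterRels n)))
    (hy : y ∈ commutator (PresentedGroup (coxeterRels n))) :
    x * y = y * x :=
  (coxeterRels.atMostOneNoncommuting_of.commute_of_mem_commutator coxeterRels.of_mul_self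
    (PresentedGroup.closure_range_of _) hx hy).eq
end

section
/- In the right-angled Coxeter group W with generators s_1,…,s_{2n}, relations s_j^2 = 1 and (s_i s_j)^2 = 1 for i < j, j ≠ i+n, the commutator subgroup [W,W] is generated by the elements (s_i s_{i+n})^2 for 1 ≤ i ≤ n. -/
/-!
Write `s_j` for the generators and `N` for the subgroup generated by the `(s_i s_{i+n})^2`.
Since the `s_j` are involutions, `(s_i s_{i+n})^2 = ⁅s_i, s_{i+n}⁆`, so `N ≤ [W, W]`. Conversely,
conjugating `⁅s_i, s_{i+n}⁆` by `s_i` or `s_{i+n}` inverts it and conjugating by any other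
generator fixes it, so `N` is normal. Modulo `N` all pairs of generators commute, hence `W ⧸ N`
is abelian and `[W, W] ≤ N`.
-/

open Subgroup
open scoped commutatorElement

section GroupTheory

variable {G : Type*} [Group G]

theorem Subgroup.conj_mem_closure_of_conj_mem {S : Set G} {t : G}
    (h : ∀ s ∈ S, t * s * t⁻¹ ∈ closure S) {x : G} (hx : x ∈ closure S) :
    t * x * t⁻¹ ∈ closure S :=
  (closure_le ((closure S).comap (MulAut.conj t).toMonoidHom)).mpr h hx

theorem Subgroup.normal_closure_of_conj_mem {T S : Set G} (hT : closure T = ⊤)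
    (hTinv : ∀ t ∈ T, t⁻¹ ∈ T) (h : ∀ t ∈ T, ∀ s ∈ S, t * s * t⁻¹ ∈ closure S) :
    (closure S).Normal := by
  refine normalizer_eq_top_iff.mp (eq_top_iff.mpr ?_)
  rw [← hT, closure_le]
  intro t ht x
  refine ⟨conj_mem_closure_of_conj_mem (h t ht), fun hx => ?_⟩
  simpa [mul_assoc] using conj_mem_closure_of_conj_mem (h t⁻¹ (hTinv t ht)) hx

theorem isMulCommutative_of_closure_eq_top {k : Set G} (hk : closure k = ⊤)
    (hcomm : ∀ x ∈ k, ∀ y ∈ k, x * y = y * x) : IsMulCommutative G := by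
  rw [← center_eq_top_iff, center_eq_iInf hk, eq_top_iff]
  refine le_iInf₂ fun g hg => ?_
  rw [← hk, closure_le]
  exact fun x hx => mem_centralizer_singleton_iff.mpr (hcomm g hg x hx).symm

theorem commutator_le_of_closure_eq_top {T : Set G} (hT : closure T = ⊤) {N : Subgroup G}
    [N.Normal] (h : ∀ s ∈ T, ∀ t ∈ T, ⁅s, t⁆ ∈ N) : commutator G ≤ N := by
  refine Normal.quotient_commutative_iff_commutator_le.mp
    (isMulCommutative_of_closure_eq_top (k := QuotientGroup.mk' N '' T) ?_ ?_)
  · rw [← MonoidHom.map_closure, hT, ← MonoidHom.range_eq_map, MonoidHom.range_eq_top]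
    exact QuotientGroup.mk'_surjective N
  · rintro _ ⟨s, hs, rfl⟩ _ ⟨t, ht, rfl⟩
    rw [← commutatorElement_eq_one_iff_mul_comm, ← map_commutatorElement, QuotientGroup.mk'_apply,
      QuotientGroup.eq_one_iff]
    exact h s hs t ht

theorem commutatorElement_eq_mul_sq {a b : G} (ha : a⁻¹ = a) (hb : b⁻¹ = b) :
    ⁅a, b⁆ = (a * b) ^ 2 := by
  rw [commutatorElement_def, ha, hb, sq, mul_assoc (a * b)]

theorem commute_of_mul_sq_eq_one {a b : G} (ha : a⁻¹ = a) (hb : b⁻¹ = b)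
    (hab : (a * b) ^ 2 = 1) : Commute a b := by
  rwa [← commutatorElement_eq_mul_sq ha hb, commutatorElement_eq_one_iff_mul_comm] at hab

theorem conj_commutatorElement_left {a b : G} (ha : a⁻¹ = a) :
    a * ⁅a, b⁆ * a⁻¹ = ⁅a, b⁆⁻¹ := by
  have haa : a * a = 1 := by simpa only [ha] using mul_inv_cancel a
  simp only [commutatorElement_def, mul_inv_rev, inv_inv, ha, ← mul_assoc, haa, one_mul]

theorem conj_commutatorElement_right {a b : G} (hb : b⁻¹ = b) :
    b * ⁅a, b⁆ * b⁻¹ = ⁅a, b⁆⁻¹ := by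
  have hbb : b * b = 1 := by simpa only [hb] using mul_inv_cancel b
  simp only [commutatorElement_def, mul_inv_rev, inv_inv, hb, mul_assoc, hbb, mul_one]

theorem conj_commutatorElement_of_commute {a b t : G} (ha : Commute t a) (hb : Commute t b) :
    t * ⁅a, b⁆ * t⁻¹ = ⁅a, b⁆ := by
  rw [conjugate_commutatorElement, ha.eq, hb.eq, mul_inv_cancel_right, mul_inv_cancel_right]

end GroupTheory

theorem Fin.val_lt_two_mul {n : ℕ} (i : Fin n) : i.val < 2 * n := by omega

theorem Fin.val_add_lt_two_mul {n : ℕ} (i : Fin n) : i.val + n < 2 * n := by omega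

namespace coxeterRels

variable {n : ℕ}

theorem of_inv (j : Fin (2 * n)) :
    (PresentedGroup.of j : PresentedGroup (coxeterRels n))⁻¹ = PresentedGroup.of j :=
  inv_eq_of_mul_eq_one_right <| by
    rw [← sq]
    exact PresentedGroup.one_of_mem (Or.inl ⟨j, rfl⟩)

theorem of_commute {i j : Fin (2 * n)} (h₁ : j.val ≠ i.val + n) (h₂ : i.val ≠ j.val + n) :
    Commute (PresentedGroup.of i : PresentedGroup (coxeterRels n)) (PresentedGroup.of j) := by
  rcases lt_trichotomy i j with h | rfl | h
  · exact commute_of_mul_sq_eq_one (of_inv i) (of_inv j)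
      (PresentedGroup.one_of_mem (Or.inr ⟨i, j, h, h₁, rfl⟩))
  · exact Commute.refl _
  · exact (commute_of_mul_sq_eq_one (of_inv j) (of_inv i)
      (PresentedGroup.one_of_mem (Or.inr ⟨j, i, h, h₂, rfl⟩))).symm

def bottCommutators (n : ℕ) : Set (PresentedGroup (coxeterRels n)) :=
  Set.range fun i : Fin n =>
    ⁅(PresentedGroup.of (⟨i.val, i.val_lt_two_mul⟩ : Fin (2 * n)) :
        PresentedGroup (coxeterRels n)),
      PresentedGroup.of (⟨i.val + n, i.val_add_lt_two_mul⟩ : Fin (2 * n))⁆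

theorem bottCommutators_eq :
    bottCommutators n = {x : PresentedGroup (coxeterRels n) |
        ∃ i : Fin n,
          x = (PresentedGroup.of (⟨i.val, i.val_lt_two_mul⟩ : Fin (2 * n)) *
               PresentedGroup.of (⟨i.val + n, i.val_add_lt_two_mul⟩ : Fin (2 * n))) ^ 2} := by
  ext x
  simp only [bottCommutators, Set.mem_range, Set.mem_ofPred_eq,
    commutatorElement_eq_mul_sq (of_inv _) (of_inv _), eq_comm]

theorem commutatorElement_of_mem_closure_bottCommutators (i j : Fin (2 * n)) :
    ⁅(PresentedGroup.of i : PresentedGroup (coxeterRels n)), PresentedGroup.of j⁆ ∈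
      closure (bottCommutators n) := by
  by_cases h₁ : j.val = i.val + n
  · rw [show j = ⟨i.val + n, by omega⟩ from Fin.ext h₁]
    exact subset_closure ⟨⟨i.val, by omega⟩, rfl⟩
  by_cases h₂ : i.val = j.val + n
  · rw [show i = ⟨j.val + n, by omega⟩ from Fin.ext h₂, ← commutatorElement_inv]
    exact inv_mem (subset_closure ⟨⟨j.val, by omega⟩, rfl⟩)
  rw [commutatorElement_eq_one_iff_mul_comm.mpr (of_commute h₁ h₂)]
  exact one_mem _

theorem conj_mem_closure_bottCommutators (j : Fin (2 * n)) {x : PresentedGroup (coxeterRels n)}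
    (hx : x ∈ bottCommutators n) :
    PresentedGroup.of j * x * (PresentedGroup.of j)⁻¹ ∈ closure (bottCommutators n) := by
  obtain ⟨i, rfl⟩ := hx
  have hmem := Subgroup.subset_closure (k := bottCommutators n) ⟨i, rfl⟩
  by_cases ha : j.val = i.val
  · rw [show j = ⟨i.val, by omega⟩ from Fin.ext ha, conj_commutatorElement_left (of_inv _)]
    exact inv_mem hmem
  by_cases hb : j.val = i.val + n
  · rw [show j = ⟨i.val + n, by omega⟩ from Fin.ext hb, conj_commutatorElement_right (of_inv _)]
    exact inv_mem hmem
  have hcomm : ∀ k : Fin (2 * n), k.val = i.val ∨ k.val = i.val + n →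
      Commute (PresentedGroup.of j : PresentedGroup (coxeterRels n)) (PresentedGroup.of k) := by
    rintro k (hk | hk) <;> exact of_commute (by omega) (by omega)
  rwa [conj_commutatorElement_of_commute (hcomm _ (.inl rfl)) (hcomm _ (.inr rfl))]

end coxeterRels

open coxeterRels in
theorem stmt_2 (n : ℕ) :
    commutator (PresentedGroup (coxeterRels n)) =
      Subgroup.closure {x : PresentedGroup (coxeterRels n) |
        ∃ i : Fin n,
          x = (PresentedGroup.of (⟨i.val, by omega⟩ : Fin (2 * n)) *
               PresentedGroup.of (⟨i.val + n, by omega⟩ : Fin (2 * n))) ^ 2} := by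
  rw [← bottCommutators_eq]
  have hgen := PresentedGroup.closure_range_of (coxeterRels n)
  have : (closure (bottCommutators n)).Normal := by
    refine normal_closure_of_conj_mem hgen ?_ ?_
    · rintro _ ⟨j, rfl⟩
      exact ⟨j, (of_inv j).symm⟩
    · rintro _ ⟨j, rfl⟩ x hx
      exact conj_mem_closure_bottCommutators j hx
  refine le_antisymm (commutator_le_of_closure_eq_top hgen ?_) ?_
  · rintro _ ⟨i, rfl⟩ _ ⟨j, rfl⟩
    exact commutatorElement_of_mem_closure_bottCommutators i j
  · rw [closure_le]
    rintro _ ⟨i, rfl⟩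
    exact commutator_mem_commutator (mem_top _) (mem_top _)
end

section
/- Let R = (ZMod 2)[y_1,…,y_n] and let I be the ideal generated by the elements y_i^2 - Σ_{j=1}^{i-1} c_{j,i} y_i y_j for 1 ≤ i ≤ n, where c_{j,i} ∈ ZMod 2. Then R/I is a free module over ZMod 2 with basis the square-free monomials y_{i_1}⋯y_{i_k}, i_1 < ⋯ < i_k (including the empty monomial 1); in particular R/I has dimension 2^n over ZMod 2. -/
/-!
On the free module with basis `e_S`, `S ⊆ Fin n`, let `y_i e_S = e_{S ∪ {i}}` for `i ∉ S` and
`y_i e_S = ∑_{j<i} c_{j,i} y_j e_S` for `i ∈ S` (a recursion on `i`). An induction on `i + k`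
shows that `y_i` and `y_k` commute, after which the defining relations of `I` hold on the nose.
So `R/I` acts on this module, and `y_S ↦ y_S e_∅ = e_S` shows that the square-free monomials
are linearly independent in `R/I`. Read inside `R/I`, the same recursion shows that their span
is stable under multiplication by each `y_i`; as it contains `1`, it is all of `R/I`.
-/

open MvPolynomial

/-- The ideal `I = (y_i² - ∑_{j<i} c_{j,i} y_i y_j : 1 ≤ i ≤ n)` in
`(ℤ/2)[y_1, …, y_n]` defining the mod-2 cohomology of a real Bott tower. -/
noncomputable def bottIdeal (n : ℕ) (c : Fin n → Fin n → ZMod 2) :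
    Ideal (MvPolynomial (Fin n) (ZMod 2)) :=
  Ideal.span {p | ∃ i : Fin n,
    p = X i ^ 2 - ∑ j ∈ Finset.univ.filter (fun j => j < i), C (c j i) * (X i * X j)}

namespace BottTower

section Representation

variable {K : Type*} [CommRing K] {n : ℕ} (c : Fin n → Fin n → K)

noncomputable def mulYSingle (S : Finset (Fin n)) (i : Fin n) : Finset (Fin n) → K :=
  if i ∈ S then
    ∑ j ∈ (Finset.univ.filter (fun j => j < i)).attach, c j i • mulYSingle S j
  else Pi.single (insert i S) 1
termination_by i.val
decreasing_by exact Fin.lt_def.mp (Finset.mem_filter.mp j.2).2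

noncomputable def mulY (i : Fin n) : Module.End K (Finset (Fin n) → K) :=
  (Pi.basisFun K (Finset (Fin n))).constr K fun S => mulYSingle c S i

lemma mulY_single_eq (i : Fin n) (S : Finset (Fin n)) :
    mulY c i (Pi.single S 1) = mulYSingle c S i := by
  rw [mulY, ← Pi.basisFun_apply, Module.Basis.constr_basis]

lemma mulY_single (i : Fin n) (S : Finset (Fin n)) :
    mulY c i (Pi.single S 1) = if i ∈ S then
      ∑ j ∈ Finset.univ.filter (fun j => j < i), c j i • mulY c j (Pi.single S 1)
    else Pi.single (insert i S) 1 := by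
  rw [mulY_single_eq, mulYSingle]
  simp only [mulY_single_eq]
  split_ifs
  · exact Finset.sum_attach _ (fun j => c j i • mulYSingle c S j)
  · rfl

variable {c}

lemma mulY_single_of_mem {i : Fin n} {S : Finset (Fin n)} (hi : i ∈ S) :
    mulY c i (Pi.single S 1) =
      ∑ j ∈ Finset.univ.filter (fun j => j < i), c j i • mulY c j (Pi.single S 1) := by
  rw [mulY_single, if_pos hi]

lemma mulY_single_of_notMem {i : Fin n} {S : Finset (Fin n)} (hi : i ∉ S) :
    mulY c i (Pi.single S 1) = Pi.single (insert i S) 1 := by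
  rw [mulY_single, if_neg hi]

lemma mulY_mulY_single_of_mem {a b : Fin n} {S : Finset (Fin n)} (hb : b ∈ S)
    (hcomm : ∀ l < b, mulY c a (mulY c l (Pi.single S 1)) = mulY c l (mulY c a (Pi.single S 1))) :
    mulY c a (mulY c b (Pi.single S 1)) =
      ∑ l ∈ Finset.univ.filter (fun l => l < b), c l b • mulY c l (mulY c a (Pi.single S 1)) := by
  rw [mulY_single_of_mem hb, map_sum]
  refine Finset.sum_congr rfl fun l hl => ?_
  rw [map_smul, hcomm l (Finset.mem_filter.mp hl).2]

lemma mulY_mulY_single_of_mem_of_notMem {a b : Fin n} {S : Finset (Fin n)} (ha : a ∈ S)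
    (hb : b ∉ S)
    (hcomm : ∀ j < a, mulY c b (mulY c j (Pi.single S 1)) = mulY c j (mulY c b (Pi.single S 1))) :
    mulY c a (mulY c b (Pi.single S 1)) = mulY c b (mulY c a (Pi.single S 1)) := by
  rw [mulY_single_of_notMem hb, mulY_single_of_mem (Finset.mem_insert_of_mem ha),
    mulY_single_of_mem ha, map_sum]
  refine Finset.sum_congr rfl fun j hj => ?_
  rw [map_smul, hcomm j (Finset.mem_filter.mp hj).2, mulY_single_of_notMem hb]

lemma mulY_mulY_single_comm (i k : Fin n) (S : Finset (Fin n)) :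
    mulY c i (mulY c k (Pi.single S 1)) = mulY c k (mulY c i (Pi.single S 1)) := by
  induction hN : i.val + k.val using Nat.strong_induction_on generalizing i k with
  | _ N ih =>
  have comm (a b : Fin n) (h : a.val + b.val < N) :
      mulY c a (mulY c b (Pi.single S 1)) = mulY c b (mulY c a (Pi.single S 1)) :=
    ih _ h a b rfl
  have lt_of_mem {a b : Fin n} (h : a ∈ Finset.univ.filter (fun j => j < b)) : a < b :=
    (Finset.mem_filter.mp h).2
  obtain rfl | hik := eq_or_ne i k
  · rfl
  by_cases hi : i ∈ S <;> by_cases hk : k ∈ S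
  · rw [mulY_mulY_single_of_mem hk fun l hl => comm _ _ (by omega),
      mulY_mulY_single_of_mem hi fun j hj => comm _ _ (by omega)]
    calc _ = ∑ l ∈ Finset.univ.filter (fun l => l < k), ∑ j ∈ Finset.univ.filter (fun j => j < i),
            c l k • c j i • mulY c j (mulY c l (Pi.single S 1)) := by
          refine Finset.sum_congr rfl fun l hl => ?_
          rw [mulY_mulY_single_of_mem hi fun j hj => comm _ _ (by have := lt_of_mem hl; omega),
            Finset.smul_sum]
      _ = ∑ j ∈ Finset.univ.filter (fun j => j < i), ∑ l ∈ Finset.univ.filter (fun l => l < k),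
            c j i • c l k • mulY c l (mulY c j (Pi.single S 1)) := by
          rw [Finset.sum_comm]
          refine Finset.sum_congr rfl fun j hj => Finset.sum_congr rfl fun l hl => ?_
          rw [smul_comm, comm _ _ (by have := lt_of_mem hj; have := lt_of_mem hl; omega)]
      _ = _ := by
          refine Finset.sum_congr rfl fun j hj => ?_
          rw [mulY_mulY_single_of_mem hk fun l hl => comm _ _ (by have := lt_of_mem hj; omega),
            Finset.smul_sum]
  · exact mulY_mulY_single_of_mem_of_notMem hi hk fun j hj => comm _ _ (by omega)
  · exact (mulY_mulY_single_of_mem_of_notMem hk hi fun j hj => comm _ _ (by omega)).symm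
  · rw [mulY_single_of_notMem hk, mulY_single_of_notMem hi,
      mulY_single_of_notMem (by simp [hik, hi]), mulY_single_of_notMem (by simp [hik.symm, hk]),
      Finset.insert_comm]

lemma ext_pi_single_one {f g : Module.End K (Finset (Fin n) → K)}
    (h : ∀ S, f (Pi.single S 1) = g (Pi.single S 1)) : f = g :=
  (Pi.basisFun K (Finset (Fin n))).ext fun S => by rw [Pi.basisFun_apply]; exact h S

lemma mulY_commute (i k : Fin n) : Commute (mulY c i) (mulY c k) := by
  refine ext_pi_single_one fun S => ?_
  rw [Module.End.mul_apply, Module.End.mul_apply, mulY_mulY_single_comm]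

lemma mulY_sq (i : Fin n) :
    mulY c i ^ 2 = ∑ j ∈ Finset.univ.filter (fun j => j < i), c j i • (mulY c i * mulY c j) := by
  refine ext_pi_single_one fun S => ?_
  simp only [sq, Module.End.mul_apply, LinearMap.sum_apply, LinearMap.smul_apply]
  by_cases hi : i ∈ S
  · rw [mulY_single_of_mem hi, map_sum]
    simp only [map_smul]
  · rw [mulY_single_of_notMem hi, mulY_single_of_mem (Finset.mem_insert_self i S)]
    refine Finset.sum_congr rfl fun j _ => ?_
    rw [mulY_mulY_single_comm, mulY_single_of_notMem hi]

variable (c) in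
noncomputable def mulYAlgebra : Subalgebra K (Module.End K (Finset (Fin n) → K)) :=
  Algebra.adjoin K (Set.range (mulY c))

instance : IsMulCommutative (mulYAlgebra c) :=
  Algebra.isMulCommutative_adjoin K (by rintro _ ⟨i, rfl⟩ _ ⟨k, rfl⟩; exact mulY_commute i k)

open scoped IsMulCommutative

variable (c) in
noncomputable def evalY : MvPolynomial (Fin n) K →ₐ[K] mulYAlgebra c :=
  aeval fun i => ⟨mulY c i, Algebra.subset_adjoin (Set.mem_range_self i)⟩

lemma coe_evalY_X (i : Fin n) :
    (evalY c (X i) : Module.End K (Finset (Fin n) → K)) = mulY c i := by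
  rw [evalY, aeval_X]

lemma evalY_bott_relation (i : Fin n) :
    evalY c (X i ^ 2 - ∑ j ∈ Finset.univ.filter (fun j => j < i), C (c j i) * (X i * X j)) = 0 := by
  rw [map_sub, sub_eq_zero, ← Subtype.coe_inj]
  simp only [← smul_eq_C_mul, map_pow, map_sum, map_smul, map_mul]
  push_cast
  simp only [coe_evalY_X, mulY_sq]

lemma evalY_prod_X_single {S T : Finset (Fin n)} (h : Disjoint S T) :
    (evalY c (∏ i ∈ S, X i) : Module.End K (Finset (Fin n) → K)) (Pi.single T 1) =
      Pi.single (S ∪ T) 1 := by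
  induction S using Finset.induction_on with
  | empty => simp
  | insert a S ha ih =>
    rw [Finset.disjoint_insert_left] at h
    rw [Finset.prod_insert ha, map_mul, Subalgebra.coe_mul, Module.End.mul_apply, ih h.2,
      coe_evalY_X, mulY_single_of_notMem (by simp [ha, h.1]), Finset.insert_union]

variable (c) in
lemma linearIndependent_evalY_prod_X :
    LinearIndependent K fun S : Finset (Fin n) => evalY c (∏ i ∈ S, X i) := by
  refine LinearIndependent.of_comp
    (LinearMap.applyₗ (Pi.single (∅ : Finset (Fin n)) 1) ∘ₗ (mulYAlgebra c).val.toLinearMap) ?_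
  convert Pi.linearIndependent_single_one (Finset (Fin n)) K with S
  exact (evalY_prod_X_single (Finset.disjoint_empty_right S)).trans (by rw [Finset.union_empty])

end Representation

section Quotient

variable {n : ℕ} (c : Fin n → Fin n → ZMod 2)

noncomputable def bottY (i : Fin n) : MvPolynomial (Fin n) (ZMod 2) ⧸ bottIdeal n c :=
  Ideal.Quotient.mk (bottIdeal n c) (X i)

lemma evalY_eq_zero_of_mem_bottIdeal {p : MvPolynomial (Fin n) (ZMod 2)}
    (hp : p ∈ bottIdeal n c) : evalY c p = 0 := by
  have hle : bottIdeal n c ≤ RingHom.ker (evalY c) :=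
    Ideal.span_le.mpr (by rintro _ ⟨i, rfl⟩; exact evalY_bott_relation i)
  exact hle hp

lemma linearIndependent_prod_bottY :
    LinearIndependent (ZMod 2) fun S : Finset (Fin n) => ∏ i ∈ S, bottY c i := by
  let ev := Ideal.Quotient.liftₐ (bottIdeal n c) (evalY c) fun _ =>
    evalY_eq_zero_of_mem_bottIdeal c
  have hev : ev.toLinearMap ∘ (fun S : Finset (Fin n) => ∏ i ∈ S, bottY c i) =
      fun S => evalY c (∏ i ∈ S, X i) := by
    funext S
    simp only [Function.comp_apply, AlgHom.toLinearMap_apply, bottY]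
    rw [← map_prod]
    rfl
  exact .of_comp ev.toLinearMap (hev ▸ linearIndependent_evalY_prod_X c)

lemma bottY_sq (i : Fin n) :
    bottY c i ^ 2 = ∑ j ∈ Finset.univ.filter (fun j => j < i), c j i • (bottY c i * bottY c j) := by
  have h : Ideal.Quotient.mkₐ (ZMod 2) (bottIdeal n c)
      (X i ^ 2 - ∑ j ∈ Finset.univ.filter (fun j => j < i), C (c j i) * (X i * X j)) = 0 :=
    Ideal.Quotient.eq_zero_iff_mem.mpr (Ideal.subset_span ⟨i, rfl⟩)
  simp only [← smul_eq_C_mul, map_sub, map_pow, map_sum, map_smul, map_mul,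
    Ideal.Quotient.mkₐ_eq_mk, sub_eq_zero] at h
  exact h

lemma bottY_mul_prod_mem_span (i : Fin n) (S : Finset (Fin n)) :
    bottY c i * ∏ j ∈ S, bottY c j ∈
      Submodule.span (ZMod 2) (Set.range fun S : Finset (Fin n) => ∏ j ∈ S, bottY c j) := by
  induction i using WellFoundedLT.induction generalizing S with
  | _ i ih =>
  by_cases hi : i ∈ S
  · have hexp : bottY c i * ∏ j ∈ S, bottY c j = ∑ j ∈ Finset.univ.filter (fun j => j < i),
        c j i • (bottY c j * ∏ j ∈ S, bottY c j) := by
      rw [← Finset.mul_prod_erase S _ hi, ← mul_assoc, ← sq, bottY_sq, Finset.sum_mul]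
      refine Finset.sum_congr rfl fun j _ => ?_
      rw [smul_mul_assoc, mul_left_comm, mul_assoc]
    rw [hexp]
    exact Submodule.sum_mem _ fun j hj =>
      Submodule.smul_mem _ _ (ih j (Finset.mem_filter.mp hj).2 S)
  · rw [← Finset.prod_insert hi]
    exact Submodule.subset_span ⟨_, rfl⟩

lemma span_prod_bottY_eq_top :
    Submodule.span (ZMod 2) (Set.range fun S : Finset (Fin n) => ∏ i ∈ S, bottY c i) = ⊤ := by
  set W := Submodule.span (ZMod 2) (Set.range fun S : Finset (Fin n) => ∏ i ∈ S, bottY c i)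
  have hY (i : Fin n) : W ≤ W.comap (LinearMap.mulLeft (ZMod 2) (bottY c i)) :=
    Submodule.span_le.mpr (by rintro _ ⟨S, rfl⟩; exact bottY_mul_prod_mem_span c i S)
  have hmul (p : MvPolynomial (Fin n) (ZMod 2)) : ∀ w ∈ W, Ideal.Quotient.mk _ p * w ∈ W := by
    induction p using MvPolynomial.induction_on with
    | C a =>
      intro w hw
      rw [← MvPolynomial.algebraMap_eq, Ideal.Quotient.mk_algebraMap, ← Algebra.smul_def]
      exact W.smul_mem a hw
    | add p q hp hq =>
      intro w hw
      rw [map_add, add_mul]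
      exact W.add_mem (hp w hw) (hq w hw)
    | mul_X p i hp =>
      intro w hw
      rw [map_mul, mul_assoc]
      exact hp _ (hY i hw)
  refine eq_top_iff.mpr fun x _ => ?_
  obtain ⟨p, rfl⟩ := Ideal.Quotient.mk_surjective x
  simpa using hmul p 1 (Submodule.subset_span ⟨∅, Finset.prod_empty⟩)

end Quotient

end BottTower

theorem stmt_6 (n : ℕ) (c : Fin n → Fin n → ZMod 2) :
    (∃ b : Module.Basis (Finset (Fin n)) (ZMod 2)
        (MvPolynomial (Fin n) (ZMod 2) ⧸ bottIdeal n c),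
      ∀ S : Finset (Fin n),
        b S = Ideal.Quotient.mk (bottIdeal n c) (∏ i ∈ S, X i)) ∧
    Module.finrank (ZMod 2) (MvPolynomial (Fin n) (ZMod 2) ⧸ bottIdeal n c) = 2 ^ n := by
  let b := Module.Basis.mk (BottTower.linearIndependent_prod_bottY c)
    (BottTower.span_prod_bottY_eq_top c).ge
  refine ⟨⟨b, fun S => ?_⟩, ?_⟩
  · rw [Module.Basis.mk_apply, map_prod]
    rfl
  · rw [Module.finrank_eq_card_basis b, Fintype.card_finset, Fintype.card_fin]
end

section
/- Let R = (ZMod 2)[y_1,…,y_n] with ideal I generated by y_i^2 - Σ_{j<i} c_{j,i} y_i y_j, 1 ≤ i ≤ n, and let w = Π_{j=2}^n (1 + Σ_{i<j} c_{i,j} y_i) ∈ R/I. The degree-1 component of w vanishes if and only if Σ_{j=i+1}^n c_{i,j} = 0 in ZMod 2 for every 1 ≤ i ≤ n-1. -/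
/-!
The ideal `I` is generated by homogeneous quadrics, so it lies in the square of the ideal of
variables and contains no nonzero linear form: the degree-one part of `w` vanishes in `R/I`
iff it vanishes in `R`. Every factor of `w` is `1` plus a linear form, so the coefficient of
`y_i` in `w` is the sum of the coefficients of `y_i` in the factors, which is the row sum
`∑_{j>i} c_{i,j}`.
-/

open MvPolynomial

/-- The polynomial representative `w = ∏_{j=2}^n (1 + ∑_{i<j} c_{i,j} y_i)` of the
total Stiefel–Whitney class of the real Bott tower. -/
noncomputable def bottSW (n : ℕ) (c : Fin n → Fin n → ZMod 2) :
    MvPolynomial (Fin n) (ZMod 2) :=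
  ∏ j ∈ Finset.univ.filter (fun j : Fin n => 0 < j.val),
    (1 + ∑ i ∈ Finset.univ.filter (fun i => i < j), C (c i j) * X i)

namespace MvPolynomial

variable {σ R : Type*} [CommSemiring R]

theorem IsHomogeneous.mem_pow_idealOfVars {p : MvPolynomial σ R} {n : ℕ}
    (hp : p.IsHomogeneous n) : p ∈ idealOfVars σ R ^ n :=
  (mem_pow_idealOfVars_iff' n p).mpr fun _ hd => hp.coeff_eq_zero hd.ne

theorem IsHomogeneous.eq_zero_of_mem_pow_idealOfVars {p : MvPolynomial σ R} {m n : ℕ}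
    (hp : p.IsHomogeneous m) (hmn : m < n) (h : p ∈ idealOfVars σ R ^ n) : p = 0 := by
  ext d
  by_cases hd : d.degree = m
  · exact (mem_pow_idealOfVars_iff' n p).mp h d (hd ▸ hmn)
  · exact hp.coeff_eq_zero hd

theorem homogeneousComponent_one_eq_zero_iff {p : MvPolynomial σ R} :
    homogeneousComponent 1 p = 0 ↔ ∀ i, coeff (Finsupp.single i 1) p = 0 := by
  refine ⟨fun h i => ?_, fun h => ?_⟩
  · simpa [coeff_homogeneousComponent] using congrArg (coeff (Finsupp.single i 1)) h
  · ext d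
    rw [coeff_homogeneousComponent, coeff_zero]
    split_ifs with hd
    · obtain ⟨i, rfl⟩ := (Finsupp.sum_eq_one_iff d).mp hd
      exact h i
    · rfl

theorem coeff_single_one_mul (p q : MvPolynomial σ R) (i : σ) :
    coeff (Finsupp.single i 1) (p * q) =
      constantCoeff p * coeff (Finsupp.single i 1) q +
        coeff (Finsupp.single i 1) p * constantCoeff q := by
  classical
  rw [coeff_mul, Finsupp.antidiagonal_single, Finset.sum_map]
  simp [Finset.Nat.antidiagonal_succ, Prod.map, constantCoeff]

theorem coeff_single_one_prod_one_add {ι : Type*} (s : Finset ι)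
    (g : ι → MvPolynomial σ R) (hg : ∀ j ∈ s, constantCoeff (g j) = 0) (i : σ) :
    coeff (Finsupp.single i 1) (∏ j ∈ s, (1 + g j)) =
      ∑ j ∈ s, coeff (Finsupp.single i 1) (g j) := by
  classical
  induction s using Finset.induction_on with
  | empty => simp [coeff_one, eq_comm, Finsupp.single_eq_zero]
  | insert a s ha ih =>
    have hs : ∀ j ∈ s, constantCoeff (g j) = 0 := fun j hj => hg j (s.mem_insert_of_mem hj)
    have hprod : constantCoeff (∏ j ∈ s, (1 + g j)) = 1 := by
      rw [map_prod]
      exact Finset.prod_eq_one fun j hj => by simp [hs j hj]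
    rw [Finset.prod_insert ha, coeff_single_one_mul, Finset.sum_insert ha, ih hs, hprod]
    simp [hg a (s.mem_insert_self a), coeff_one, eq_comm, Finsupp.single_eq_zero, add_comm]

end MvPolynomial

theorem coeff_single_one_bottSW (n : ℕ) (c : Fin n → Fin n → ZMod 2) (i : Fin n) :
    coeff (Finsupp.single i 1) (bottSW n c) =
      ∑ j ∈ Finset.univ.filter (fun j => i < j), c i j := by
  rw [bottSW, coeff_single_one_prod_one_add _ _ (fun j _ => by simp)]
  have hlinear : ∀ j : Fin n, coeff (Finsupp.single i 1)
      (∑ i' ∈ Finset.univ.filter (fun i' => i' < j), C (c i' j) * X i') =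
        if i < j then c i j else 0 := by
    intro j
    simp [coeff_sum, coeff_C_mul, coeff_X, Finsupp.single_left_inj one_ne_zero]
  simp only [hlinear, Finset.sum_ite, Finset.sum_const_zero, add_zero, Finset.filter_filter]
  congr 1
  ext j
  simp only [Finset.mem_filter, Finset.mem_univ, true_and, Fin.lt_def]
  omega

theorem bottIdeal_le_pow_idealOfVars (n : ℕ) (c : Fin n → Fin n → ZMod 2) :
    bottIdeal n c ≤ idealOfVars (Fin n) (ZMod 2) ^ 2 := by
  refine Ideal.span_le.mpr ?_
  rintro _ ⟨i, rfl⟩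
  refine IsHomogeneous.mem_pow_idealOfVars (.sub ?_ (.sum _ _ _ fun j _ => ?_))
  · simpa using (isHomogeneous_X (ZMod 2) i).pow 2
  · simpa using ((isHomogeneous_X (ZMod 2) i).mul (isHomogeneous_X (ZMod 2) j)).C_mul (c j i)

/-- Orientability criterion: `w₁(Y(C)) = 0` iff every row sum
`∑_{j=i+1}^n c_{i,j}` vanishes (for `1 ≤ i ≤ n-1`). -/
theorem stmt_9 (n : ℕ) (c : Fin n → Fin n → ZMod 2) :
    Ideal.Quotient.mk (bottIdeal n c)
        (MvPolynomial.homogeneousComponent 1 (bottSW n c)) = 0 ↔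
      ∀ i : Fin n, i.val + 1 < n →
        (∑ j ∈ Finset.univ.filter (fun j => i < j), c i j) = 0 := by
  have hmem : homogeneousComponent 1 (bottSW n c) ∈ bottIdeal n c ↔
      homogeneousComponent 1 (bottSW n c) = 0 :=
    ⟨fun h => (homogeneousComponent_isHomogeneous 1 _).eq_zero_of_mem_pow_idealOfVars
      one_lt_two (bottIdeal_le_pow_idealOfVars n c h), fun h => h ▸ zero_mem _⟩
  rw [Ideal.Quotient.eq_zero_iff_mem, hmem, homogeneousComponent_one_eq_zero_iff]
  simp only [coeff_single_one_bottSW]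
  refine ⟨fun h i _ => h i, fun h i => ?_⟩
  by_cases hi : i.val + 1 < n
  · exact h i hi
  · have hempty : Finset.univ.filter (fun j => i < j) = ∅ := by
      ext j
      simp only [Finset.mem_filter, Finset.mem_univ, true_and, Finset.notMem_empty, iff_false,
        Fin.lt_def]
      omega
    rw [hempty, Finset.sum_empty]
end

section
/- Let R = (ZMod 2)[y_1,…,y_n] with ideal I generated by y_i^2 - Σ_{j<i} c_{j,i} y_i y_j, and w = Π_{j=2}^n (1 + Σ_{i<j} c_{i,j} y_i) ∈ R/I. Then the degree-(n-1) component of w equals (c_{1,2} c_{2,3} ⋯ c_{n-1,n}) · y_1 y_2 ⋯ y_{n-1}. -/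
open MvPolynomial Finset

namespace BottAux

variable {n : ℕ} (c : Fin n → Fin n → ZMod 2)

/-- product of the first `k` variables -/
noncomputable def Mk (n k : ℕ) : MvPolynomial (Fin n) (ZMod 2) :=
  ∏ t ∈ Finset.univ.filter (fun t : Fin n => t.val < k), X t

lemma sq_rel (i : Fin n) :
    Ideal.Quotient.mk (bottIdeal n c) (X i ^ 2) =
      Ideal.Quotient.mk (bottIdeal n c)
        (∑ j ∈ Finset.univ.filter (fun j => j < i), C (c j i) * (X i * X j)) := by
  rw [Ideal.Quotient.eq]
  exact Ideal.subset_span ⟨i, rfl⟩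

lemma core (k : ℕ) (i : Fin n) (hik : i.val < k) :
    Ideal.Quotient.mk (bottIdeal n c) (Mk n k * X i) =
      ∑ j ∈ Finset.univ.filter (fun j => j < i),
        Ideal.Quotient.mk (bottIdeal n c) (C (c j i) * (Mk n k * X j)) := by
  have hi : i ∈ Finset.univ.filter (fun t : Fin n => t.val < k) := by simp [hik]
  set M' : MvPolynomial (Fin n) (ZMod 2) :=
    ∏ t ∈ (Finset.univ.filter (fun t : Fin n => t.val < k)).erase i, X t with hM'
  have h1 : Mk n k = X i * M' := (Finset.mul_prod_erase _ _ hi).symm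
  have h2 : Mk n k * X i = M' * X i ^ 2 := by rw [h1]; ring
  rw [h2, map_mul, sq_rel, ← map_mul, Finset.mul_sum, map_sum]
  refine Finset.sum_congr rfl fun j hj => ?_
  congr 1
  rw [h1]; ring

lemma lemA_aux (k : ℕ) : ∀ m : ℕ, ∀ i : Fin n, i.val < m → i.val < k →
    Ideal.Quotient.mk (bottIdeal n c) (Mk n k * X i) = 0 := by
  intro m
  induction m with
  | zero => omega
  | succ m ih =>
    intro i hi hik
    rw [core c k i hik]
    refine Finset.sum_eq_zero fun j hj => ?_
    have hji : j < i := by simpa using hj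
    rw [map_mul, ih j (by omega) (lt_trans hji hik), mul_zero]

lemma lemA (k : ℕ) (i : Fin n) (hik : i.val < k) :
    Ideal.Quotient.mk (bottIdeal n c) (Mk n k * X i) = 0 :=
  lemA_aux c k (i.val + 1) i (Nat.lt_succ_self _) hik

end BottAux

namespace BottAux2
open BottAux

variable {n : ℕ} (c : Fin n → Fin n → ZMod 2)

/-- the linear form attached to `j` -/
noncomputable def Lj (j : Fin n) : MvPolynomial (Fin n) (ZMod 2) :=
  ∑ i ∈ Finset.univ.filter (fun i => i < j), C (c i j) * X i

noncomputable def dseq (i : ℕ) : ZMod 2 :=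
  if h : i + 1 < n then c ⟨i, by omega⟩ ⟨i + 1, h⟩ else 0

lemma Mk_succ {k : ℕ} (h : k < n) : Mk n (k + 1) = X ⟨k, h⟩ * Mk n k := by
  rw [Mk, Mk, ← Finset.prod_insert (s := Finset.univ.filter (fun t : Fin n => t.val < k))
      (by simp)]
  congr 1
  ext t
  simp only [Finset.mem_filter, Finset.mem_univ, true_and, Finset.mem_insert, Fin.ext_iff]
  omega

lemma lemB : ∀ k : ℕ, k ≤ n - 1 →
    Ideal.Quotient.mk (bottIdeal n c)
      (∏ j ∈ Finset.univ.filter (fun j : Fin n => 0 < j.val ∧ j.val ≤ k), Lj c j) =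
    Ideal.Quotient.mk (bottIdeal n c)
      (C (∏ i ∈ Finset.range k, dseq c i) * Mk n k) := by
  intro k
  induction k with
  | zero =>
    intro _
    have h1 : Finset.univ.filter (fun j : Fin n => 0 < j.val ∧ j.val ≤ 0) = ∅ := by
      ext t; simp; omega
    have h2 : Finset.univ.filter (fun t : Fin n => t.val < 0) = ∅ := by
      ext t; simp
    rw [Mk, h1, h2]
    simp
  | succ k ih =>
    intro hk
    have hk1 : k + 1 < n := by omega
    set j0 : Fin n := ⟨k + 1, hk1⟩ with hj0
    set xk : Fin n := ⟨k, by omega⟩ with hxk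
    have hfilter : Finset.univ.filter (fun j : Fin n => 0 < j.val ∧ j.val ≤ k + 1)
        = insert j0 (Finset.univ.filter (fun j : Fin n => 0 < j.val ∧ j.val ≤ k)) := by
      ext t
      simp only [Finset.mem_filter, Finset.mem_univ, true_and, Finset.mem_insert, hj0,
        Fin.ext_iff]
      omega
    have hnot : j0 ∉ Finset.univ.filter (fun j : Fin n => 0 < j.val ∧ j.val ≤ k) := by
      simp [hj0]
    rw [hfilter, Finset.prod_insert hnot, mul_comm, map_mul, ih (by omega), ← map_mul]
    set P : ZMod 2 := ∏ i ∈ Finset.range k, dseq c i with hP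
    have hexp : C P * Mk n k * Lj c j0
        = C P * ∑ i ∈ Finset.univ.filter (fun i => i < j0), C (c i j0) * (Mk n k * X i) := by
      rw [Lj, Finset.mul_sum, Finset.mul_sum]
      exact Finset.sum_congr rfl fun i _ => by ring
    have hins : Finset.univ.filter (fun i : Fin n => i < j0)
        = insert xk (Finset.univ.filter (fun i : Fin n => i.val < k)) := by
      ext t
      simp only [Finset.mem_filter, Finset.mem_univ, true_and, Finset.mem_insert, hj0, hxk,
        Fin.lt_def, Fin.ext_iff]
      omega
    have hxknot : xk ∉ Finset.univ.filter (fun i : Fin n => i.val < k) := by simp [hxk]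
    rw [hexp, map_mul, map_sum, hins, Finset.sum_insert hxknot]
    have hzero : ∑ i ∈ Finset.univ.filter (fun i : Fin n => i.val < k),
        Ideal.Quotient.mk (bottIdeal n c) (C (c i j0) * (Mk n k * X i)) = 0 := by
      refine Finset.sum_eq_zero fun i hi => ?_
      rw [map_mul, lemA c k i (by simpa using hi), mul_zero]
    rw [hzero, add_zero]
    have hd : dseq c k = c xk j0 := by rw [dseq, dif_pos hk1]
    rw [Finset.prod_range_succ, ← hP, hd, Mk_succ (show k < n by omega)]
    rw [← map_mul]
    congr 1
    rw [C_mul]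
    ring

end BottAux2

section Homog

variable {n : ℕ} (c : Fin n → Fin n → ZMod 2)

lemma homog_comp_prod {τ : Type*} [DecidableEq τ] (s : Finset τ)
    (L : τ → MvPolynomial (Fin n) (ZMod 2)) (hL : ∀ j ∈ s, (L j).IsHomogeneous 1) :
    homogeneousComponent s.card (∏ j ∈ s, (1 + L j)) = ∏ j ∈ s, L j := by
  rw [Finset.prod_add, map_sum, Finset.sum_eq_single (∅ : Finset τ)]
  · have hhom : (∏ j ∈ s \ ∅, L j).IsHomogeneous s.card := by
      have := MvPolynomial.IsHomogeneous.prod (s \ ∅) L (fun _ => 1)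
        (fun j hj => hL j (by simpa using hj))
      simpa using this
    rw [Finset.prod_empty, one_mul, homogeneousComponent_of_mem hhom, if_pos rfl]
    simp
  · intro t ht hne
    have hsub : t ⊆ s := Finset.mem_powerset.mp ht
    have hhom : (∏ j ∈ s \ t, L j).IsHomogeneous ((s \ t).card) := by
      have := MvPolynomial.IsHomogeneous.prod (s \ t) L (fun _ => 1)
        (fun j hj => hL j (Finset.mem_sdiff.mp hj).1)
      simpa using this
    have hlt : (s \ t).card < s.card := by
      rw [Finset.card_sdiff_of_subset hsub]
      have h1 : 0 < t.card := Finset.card_pos.mpr (Finset.nonempty_iff_ne_empty.mpr hne)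
      have h2 : t.card ≤ s.card := Finset.card_le_card hsub
      omega
    rw [Finset.prod_const_one, one_mul, homogeneousComponent_of_mem hhom, if_neg (by omega)]
  · simp

end Homog

namespace BottAux2

variable {n : ℕ} (c : Fin n → Fin n → ZMod 2)

lemma Mk_range {k : ℕ} (hk : k ≤ n) :
    BottAux.Mk n k = ∏ i ∈ Finset.range k,
      (if h : i < n then (X ⟨i, h⟩ : MvPolynomial (Fin n) (ZMod 2)) else 1) := by
  induction k with
  | zero =>
    have : Finset.univ.filter (fun t : Fin n => t.val < 0) = ∅ := by ext t; simp
    rw [BottAux.Mk, this]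
    simp
  | succ k ih =>
    rw [Mk_succ (by omega : k < n), Finset.prod_range_succ, ih (by omega),
      dif_pos (by omega : k < n), mul_comm]

end BottAux2

/-- `w_{n-1}(Y_n) = c_{1,2} c_{2,3} ⋯ c_{n-1,n} · y_1 y_2 ⋯ y_{n-1}`. -/
theorem stmt_10 (n : ℕ) (c : Fin n → Fin n → ZMod 2) :
    Ideal.Quotient.mk (bottIdeal n c)
        (MvPolynomial.homogeneousComponent (n - 1) (bottSW n c)) =
      Ideal.Quotient.mk (bottIdeal n c)
        (C (∏ i : Fin (n - 1), c ⟨i.val, by omega⟩ ⟨i.val + 1, by omega⟩) *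
          ∏ i : Fin (n - 1), X (⟨i.val, by omega⟩ : Fin n)) := by
  classical
  rcases n with _ | m
  · simp only [Nat.zero_sub, bottSW, Finset.univ_eq_empty, Finset.filter_empty,
      Finset.prod_empty]
    rw [homogeneousComponent_zero]
    simp
  have hcard : (Finset.univ.filter (fun j : Fin (m+1) => 0 < j.val)).card = m+1 - 1 := by
    have he : Finset.univ.filter (fun j : Fin (m+1) => 0 < j.val) =
        Finset.univ.erase (0 : Fin (m+1)) := by
      ext t
      simp only [Finset.mem_filter, Finset.mem_univ, true_and, Finset.mem_erase, and_true,
        ne_eq, Fin.ext_iff, Fin.val_zero]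
      omega
    rw [he, Finset.card_erase_of_mem (Finset.mem_univ _), Finset.card_univ, Fintype.card_fin]
  have hSW : MvPolynomial.homogeneousComponent (m+1 - 1) (bottSW (m+1) c) =
      ∏ j ∈ Finset.univ.filter (fun j : Fin (m+1) => 0 < j.val), BottAux2.Lj c j := by
    rw [bottSW, ← hcard]
    exact homog_comp_prod _ _ fun j _ => MvPolynomial.IsHomogeneous.sum _ _ _
      (fun i _ => by simpa using (isHomogeneous_C _ (c i j)).mul (isHomogeneous_X _ i))
  have hfe : Finset.univ.filter (fun j : Fin (m+1) => 0 < j.val) =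
      Finset.univ.filter (fun j : Fin (m+1) => 0 < j.val ∧ j.val ≤ m+1 - 1) := by
    ext t
    simp only [Finset.mem_filter, Finset.mem_univ, true_and]
    have := t.isLt
    omega
  rw [hSW, hfe, BottAux2.lemB c (m+1 - 1) le_rfl]
  congr 2
  · rw [show (∏ i : Fin (m+1 - 1), c ⟨i.val, by omega⟩ ⟨i.val + 1, by omega⟩)
        = ∏ i : Fin (m+1 - 1), BottAux2.dseq c i.val from
      Finset.prod_congr rfl fun i _ => by
        rw [BottAux2.dseq, dif_pos (by omega : i.val + 1 < m+1)]]
    exact congrArg C (Fin.prod_univ_eq_prod_range (BottAux2.dseq c) (m+1 - 1)).symm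
  · rw [BottAux2.Mk_range (n := m+1) (by omega : m+1 - 1 ≤ m+1)]
    rw [show (∏ i : Fin (m+1 - 1), X (⟨i.val, by omega⟩ : Fin (m+1)))
        = ∏ i : Fin (m+1 - 1),
            (if h : i.val < m+1 then (X ⟨i.val, h⟩ : MvPolynomial (Fin (m+1)) (ZMod 2)) else 1) from
      Finset.prod_congr rfl fun i _ => by rw [dif_pos (by omega : i.val < m+1)]]
    exact (Fin.prod_univ_eq_prod_range _ (m+1 - 1)).symm
end

section
/- Let R = (ZMod 2)[y_1,…,y_n] with ideal I generated by y_i^2 - Σ_{j<i} c_{j,i} y_i y_j, and w = Π_{j=2}^n (1 + Σ_{i<j} c_{i,j} y_i) ∈ R/I. Assume Σ_{j=i+1}^n c_{i,j} = 0 for every i (orientability). Then the degree-2 component of w equals Σ_{1≤j<k≤n-2} ( Σ_{r=j+1}^n Σ_{s=k+1, s≠r}^n c_{j,r} c_{k,s} + c_{j,k} Σ_{k+1≤r<s≤n} c_{k,r} c_{k,s} ) · y_j y_k, and this vanishes iff each coefficient Σ_{r=j+1}^n Σ_{s=k+1, s≠r}^n c_{j,r} c_{k,s} + c_{j,k} Σ_{k+1≤r<s≤n}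 c_{k,r} c_{k,s} = 0 in ZMod 2 for all 1 ≤ j < k ≤ n-2. -/
open MvPolynomial

/-- The coefficient of `y_j y_k` in `w₂`:
`∑_{r=j+1}^n ∑_{s=k+1, s≠r}^n c_{j,r} c_{k,s} + c_{j,k} ∑_{k+1≤r<s≤n} c_{k,r} c_{k,s}`. -/
def spinCoeff (n : ℕ) (c : Fin n → Fin n → ZMod 2) (j k : Fin n) : ZMod 2 :=
  (∑ r ∈ Finset.univ.filter (fun r => j < r),
    ∑ s ∈ Finset.univ.filter (fun s => k < s ∧ s ≠ r), c j r * c k s) +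
  c j k * ∑ r ∈ Finset.univ.filter (fun r => k < r),
    ∑ s ∈ Finset.univ.filter (fun s => r < s), c k r * c k s

open Finset

/-!
The degree-2 part of `w = ∏ⱼ (1 + Lⱼ)`, with `Lⱼ = ∑_{i<j} c_{i,j} yᵢ`, is `∑_{j<k} Lⱼ Lₖ`.
Expanding it gives `crossSum c a b` as the coefficient of `y_a y_b` (`a < b`) and
`rowPairSum c a` as the coefficient of `y_a²`; the relation `y_a² = ∑_{p<a} c_{p,a} y_a y_p`
moves the latter onto the monomials `y_p y_a`, which yields `spinCoeff`. Orientability forces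
`c_{k,s} = 0` whenever `s` is the only index above `k`, so the coefficients with `n ≤ k + 2`
vanish.

For the criterion, take the functional `[y_j y_k] + c_{j,k} [y_k²]` on coefficients. The `k`-th
generator `y_k² - ∑_{p<k} c_{p,k} y_k y_p` has coefficients `1` and `-c_{j,k}` there, so every
generator is killed, hence (the generators being homogeneous quadrics) the whole ideal, while on
the displayed combination of the monomials `y_j y_k` the functional reads off `spinCoeff j k`.
-/

section HomogeneousComponent
variable {σ R : Type*} [CommSemiring R]
attribute [local instance] MvPolynomial.gradedAlgebra

theorem MvPolynomial.homogeneousComponent_eq_decompose (p : MvPolynomial σ R) (m : ℕ) :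
    homogeneousComponent m p =
      (DirectSum.decompose (homogeneousSubmodule σ R) p m : MvPolynomial σ R) :=
  (decomposition.decompose'_apply p m).symm

theorem MvPolynomial.IsHomogeneous.homogeneousComponent_mul_of_le {f : MvPolynomial σ R}
    {i m : ℕ} (hf : f.IsHomogeneous i) (h : i ≤ m) (g : MvPolynomial σ R) :
    homogeneousComponent m (f * g) = f * homogeneousComponent (m - i) g := by
  simp only [homogeneousComponent_eq_decompose]
  exact DirectSum.coe_decompose_mul_of_left_mem_of_le _ hf h

variable {ι : Type*} {L : ι → MvPolynomial σ R}

theorem homogeneousComponent_zero_prod_one_add (hL : ∀ j, (L j).IsHomogeneous 1)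
    (T : Finset ι) : homogeneousComponent 0 (∏ j ∈ T, (1 + L j)) = 1 := by
  have h : ∀ j, coeff 0 (L j) = 0 := fun j => (hL j).coeff_eq_zero (by simp)
  rw [homogeneousComponent_zero, ← constantCoeff_eq, map_prod]
  simp [constantCoeff_eq, h]

theorem homogeneousComponent_one_prod_one_add [DecidableEq ι]
    (hL : ∀ j, (L j).IsHomogeneous 1) (T : Finset ι) :
    homogeneousComponent 1 (∏ j ∈ T, (1 + L j)) = ∑ j ∈ T, L j := by
  induction T using Finset.induction_on with
  | empty => exact homogeneousComponent_eq_zero _ _ (by simp)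
  | insert a s ha ih =>
    rw [prod_insert ha, one_add_mul, map_add, ih, (hL a).homogeneousComponent_mul_of_le le_rfl,
      Nat.sub_self, homogeneousComponent_zero_prod_one_add hL, mul_one, sum_insert ha, add_comm]

theorem homogeneousComponent_two_prod_one_add [LinearOrder ι]
    (hL : ∀ j, (L j).IsHomogeneous 1) (T : Finset ι) :
    homogeneousComponent 2 (∏ j ∈ T, (1 + L j)) =
      ∑ j ∈ T, ∑ k ∈ T.filter (j < ·), L j * L k := by
  induction T using Finset.induction_on_max with
  | empty => exact homogeneousComponent_eq_zero _ _ (by simp)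
  | insert a s hmax ih =>
    have ha : a ∉ s := fun h => lt_irrefl a (hmax a h)
    have h_top : (insert a s).filter (a < ·) = ∅ :=
      filter_eq_empty_iff.mpr fun x hx => by
        rcases mem_insert.mp hx with rfl | hx
        exacts [lt_irrefl x, (hmax x hx).not_gt]
    have h_below : ∀ j ∈ s, (insert a s).filter (j < ·) = insert a (s.filter (j < ·)) :=
      fun j hj => by rw [filter_insert, if_pos (hmax j hj)]
    have h_rhs : ∑ j ∈ insert a s, ∑ k ∈ (insert a s).filter (j < ·), L j * L k =
        ∑ j ∈ s, (L j * L a + ∑ k ∈ s.filter (j < ·), L j * L k) := by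
      rw [sum_insert ha, h_top, sum_empty, zero_add]
      exact sum_congr rfl fun j hj => by rw [h_below j hj, sum_insert (by simp [ha])]
    rw [h_rhs, prod_insert ha, one_add_mul, map_add, ih,
      (hL a).homogeneousComponent_mul_of_le one_le_two, show 2 - 1 = 1 from rfl,
      homogeneousComponent_one_prod_one_add hL, sum_add_distrib, mul_sum, add_comm,
      sum_congr rfl fun j _ => mul_comm (L a) (L j)]

end HomogeneousComponent

section Monomials
variable {σ : Type*}

theorem single_add_single_eq_iff_of_lt [LinearOrder σ] {a b j k : σ} (hab : a < b)
    (hjk : j < k) :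
    (Finsupp.single a 1 + Finsupp.single b 1 : σ →₀ ℕ) = Finsupp.single j 1 + Finsupp.single k 1 ↔
      a = j ∧ b = k := by
  rw [Finsupp.single_add_single_eq_single_add_single one_ne_zero one_ne_zero]
  constructor
  · rintro (h | ⟨-, rfl, rfl⟩ | ⟨h, -⟩)
    exacts [h, absurd (hab.trans hjk) (lt_irrefl _), absurd h (by norm_num)]
  · exact Or.inl

theorem single_add_single_ne_single_two {a b : σ} (hab : a ≠ b) (k : σ) :
    (Finsupp.single a 1 + Finsupp.single b 1 : σ →₀ ℕ) ≠ Finsupp.single k 2 := by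
  classical
  intro h
  have h_at := DFunLike.congr_fun h a
  simp only [Finsupp.add_apply, Finsupp.single_apply, if_neg hab.symm] at h_at
  split_ifs at h_at <;> omega

end Monomials

section Tower
variable {ι R : Type*} [Fintype ι] [LinearOrder ι] [CommSemiring R]

theorem sum_sum_eq_sum_lt_add_sum_diag {M : Type*} [AddCommMonoid M] (F : ι → ι → M) :
    ∑ a, ∑ b, F a b = ∑ a, ∑ b ∈ univ.filter (a < ·), (F a b + F b a) + ∑ a, F a a := by
  have split : ∀ a b, F a b = ((if a < b then F a b else 0) + (if b < a then F a b else 0)) +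
      (if a = b then F a b else 0) := by
    intro a b
    rcases lt_trichotomy a b with h | rfl | h
    · simp [h, h.ne, h.not_gt]
    · simp
    · simp [h, h.ne', h.not_gt]
  rw [sum_congr rfl fun a _ => sum_congr rfl fun b _ => split a b]
  simp only [sum_add_distrib, sum_ite_eq, mem_univ, if_true, sum_filter]
  rw [sum_comm (f := fun a b => if b < a then F a b else 0)]

theorem sum_sum_lt_mul_sum_C_mul_X (u : ι → ι → R) :
    ∑ j, ∑ k ∈ univ.filter (j < ·),
        (∑ a, C (u a j) * X a : MvPolynomial ι R) * ∑ b, C (u b k) * X b =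
      ∑ a, ∑ b, C (∑ j, ∑ k ∈ univ.filter (j < ·), u a j * u b k) * (X a * X b) := by
  simp only [sum_mul_sum]
  simp only [map_sum, sum_mul]
  rw [sum_sigma', sum_comm]
  refine sum_congr rfl fun a _ => ?_
  rw [sum_comm]
  refine sum_congr rfl fun b _ => ?_
  rw [sum_sigma']
  refine sum_congr rfl fun x _ => ?_
  rw [map_mul]
  ring

variable (c : ι → ι → R)

noncomputable def towerLinearForm (j : ι) : MvPolynomial ι R :=
  ∑ i ∈ univ.filter (· < j), C (c i j) * X i

def strictUpper (a j : ι) : R := if a < j then c a j else 0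

def crossSum (a b : ι) : R :=
  ∑ r ∈ univ.filter (a < ·), ∑ s ∈ univ.filter (fun s => b < s ∧ s ≠ r), c a r * c b s

def rowPairSum (k : ι) : R :=
  ∑ r ∈ univ.filter (k < ·), ∑ s ∈ univ.filter (r < ·), c k r * c k s

theorem isHomogeneous_towerLinearForm (j : ι) : (towerLinearForm c j).IsHomogeneous 1 :=
  IsHomogeneous.sum _ _ _ fun _ _ => isHomogeneous_C_mul_X _ _

theorem towerLinearForm_eq_sum_strictUpper (j : ι) :
    towerLinearForm c j = ∑ a, C (strictUpper c a j) * X a := by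
  simp only [towerLinearForm, strictUpper, sum_filter, apply_ite C, map_zero, ite_mul, zero_mul]

theorem crossSum_eq_sum_lt_strictUpper (a b : ι) :
    crossSum c a b =
      ∑ j, ∑ k ∈ univ.filter (j < ·), strictUpper c a j * strictUpper c b k +
        ∑ j, ∑ k ∈ univ.filter (j < ·), strictUpper c b j * strictUpper c a k := by
  have h_swap : ∑ j, ∑ k ∈ univ.filter (j < ·), strictUpper c b j * strictUpper c a k =
      ∑ k, ∑ j ∈ univ.filter (· < k), strictUpper c b j * strictUpper c a k :=
    sum_comm' (by simp)
  rw [h_swap]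
  simp only [crossSum, sum_filter, ← sum_add_distrib]
  refine sum_congr rfl fun r _ => ?_
  by_cases har : a < r
  · simp only [if_pos har]
    refine sum_congr rfl fun s _ => ?_
    simp only [strictUpper, ite_and, ne_eq, ite_not]
    split_ifs <;> first | (exfalso; order) | ring
  · simp [strictUpper, har]

theorem rowPairSum_eq_sum_lt_strictUpper (a : ι) :
    rowPairSum c a = ∑ j, ∑ k ∈ univ.filter (j < ·), strictUpper c a j * strictUpper c a k := by
  simp only [rowPairSum, sum_filter]
  refine sum_congr rfl fun r _ => ?_
  by_cases har : a < r
  · simp only [if_pos har]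
    refine sum_congr rfl fun s _ => ?_
    simp only [strictUpper]
    split_ifs <;> first | (exfalso; order) | ring
  · simp [strictUpper, har]

theorem homogeneousComponent_two_prod_towerLinearForm :
    homogeneousComponent 2 (∏ j, (1 + towerLinearForm c j)) =
      ∑ a, ∑ b ∈ univ.filter (a < ·), C (crossSum c a b) * (X a * X b) +
        ∑ a, C (rowPairSum c a) * X a ^ 2 := by
  rw [homogeneousComponent_two_prod_one_add (isHomogeneous_towerLinearForm c)]
  simp only [towerLinearForm_eq_sum_strictUpper]
  rw [sum_sum_lt_mul_sum_C_mul_X, sum_sum_eq_sum_lt_add_sum_diag]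
  congr 1
  · refine sum_congr rfl fun a _ => sum_congr rfl fun b _ => ?_
    rw [crossSum_eq_sum_lt_strictUpper, map_add, add_mul, mul_comm (X b) (X a)]
  · refine sum_congr rfl fun a _ => ?_
    rw [rowPairSum_eq_sum_lt_strictUpper, sq]

end Tower

section Bott
variable {n : ℕ} (c : Fin n → Fin n → ZMod 2)

theorem bottSW_eq_prod_towerLinearForm : bottSW n c = ∏ j, (1 + towerLinearForm c j) := by
  refine prod_filter_of_ne fun j _ hj => Nat.pos_of_ne_zero fun hj0 => hj ?_
  rw [filter_eq_empty_iff.mpr fun i _ => by simp [Fin.lt_def, hj0], sum_empty, add_zero]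

theorem spinCoeff_eq_crossSum_add (j k : Fin n) :
    spinCoeff n c j k = crossSum c j k + c j k * rowPairSum c k :=
  rfl

theorem mk_X_sq_bottIdeal (a : Fin n) :
    Ideal.Quotient.mk (bottIdeal n c) (X a ^ 2) =
      Ideal.Quotient.mk (bottIdeal n c)
        (∑ p ∈ univ.filter (· < a), C (c p a) * (X a * X p)) :=
  Ideal.Quotient.eq.mpr (Ideal.subset_span ⟨a, rfl⟩)

theorem sum_crossSum_add_sum_rowPairSum :
    ∑ a, ∑ b ∈ univ.filter (a < ·), C (crossSum c a b) * (X a * X b) +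
        ∑ a, C (rowPairSum c a) * ∑ p ∈ univ.filter (· < a), C (c p a) * (X a * X p) =
      ∑ j, ∑ k ∈ univ.filter (j < ·), C (spinCoeff n c j k) * (X j * X k) := by
  have h_swap : ∑ a, C (rowPairSum c a) * ∑ p ∈ univ.filter (· < a), C (c p a) * (X a * X p) =
      ∑ p, ∑ a ∈ univ.filter (p < ·), C (rowPairSum c a) * (C (c p a) * (X a * X p)) := by
    simp only [mul_sum]
    exact sum_comm' (by simp)
  rw [h_swap, ← sum_add_distrib]
  refine sum_congr rfl fun j _ => ?_
  rw [← sum_add_distrib]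
  refine sum_congr rfl fun k _ => ?_
  rw [spinCoeff_eq_crossSum_add, map_add, map_mul]
  ring

theorem mk_homogeneousComponent_two_bottSW :
    Ideal.Quotient.mk (bottIdeal n c) (homogeneousComponent 2 (bottSW n c)) =
      Ideal.Quotient.mk (bottIdeal n c)
        (∑ j, ∑ k ∈ univ.filter (j < ·), C (spinCoeff n c j k) * (X j * X k)) := by
  rw [bottSW_eq_prod_towerLinearForm, homogeneousComponent_two_prod_towerLinearForm,
    ← sum_crossSum_add_sum_rowPairSum, map_add, map_add]
  congr 1
  simp only [map_sum, map_mul, mk_X_sq_bottIdeal]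

theorem isHomogeneous_bottIdeal_generator (i : Fin n) :
    (X i ^ 2 - ∑ p ∈ univ.filter (· < i), C (c p i) * (X i * X p) :
      MvPolynomial (Fin n) (ZMod 2)).IsHomogeneous 2 :=
  (isHomogeneous_X_pow i 2).sub <| IsHomogeneous.sum _ _ _ fun _ _ =>
    (isHomogeneous_C _ _).mul ((isHomogeneous_X _ _).mul (isHomogeneous_X _ _))

noncomputable def spinFunctional (c : Fin n → Fin n → ZMod 2) (j k : Fin n) :
    MvPolynomial (Fin n) (ZMod 2) →ₗ[ZMod 2] ZMod 2 :=
  lcoeff (ZMod 2) (Finsupp.single j 1 + Finsupp.single k 1) +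
    c j k • lcoeff (ZMod 2) (Finsupp.single k 2)

variable {j k : Fin n}

theorem spinFunctional_apply (x : MvPolynomial (Fin n) (ZMod 2)) :
    spinFunctional c j k x =
      coeff (Finsupp.single j 1 + Finsupp.single k 1) x + c j k * coeff (Finsupp.single k 2) x :=
  rfl

theorem spinFunctional_homogeneousComponent_two (x : MvPolynomial (Fin n) (ZMod 2)) :
    spinFunctional c j k (homogeneousComponent 2 x) = spinFunctional c j k x := by
  simp [spinFunctional_apply, coeff_homogeneousComponent]

theorem spinFunctional_mul_of_isHomogeneous {g : MvPolynomial (Fin n) (ZMod 2)}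
    (hg : g.IsHomogeneous 2) (f : MvPolynomial (Fin n) (ZMod 2)) :
    spinFunctional c j k (f * g) = coeff 0 f * spinFunctional c j k g := by
  rw [← spinFunctional_homogeneousComponent_two, mul_comm,
    hg.homogeneousComponent_mul_of_le le_rfl, Nat.sub_self, homogeneousComponent_zero, mul_comm,
    ← smul_eq_C_mul, map_smul, smul_eq_mul]

theorem spinFunctional_C_mul_X_mul_X (hjk : j < k) {a b : Fin n} (hab : a < b) (e : ZMod 2) :
    spinFunctional c j k (C e * (X a * X b)) = if a = j ∧ b = k then e else 0 := by
  rw [spinFunctional_apply, X, X, monomial_mul, C_mul_monomial, coeff_monomial, coeff_monomial,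
    if_neg (single_add_single_ne_single_two hab.ne k), mul_zero, add_zero]
  exact if_congr (single_add_single_eq_iff_of_lt hab hjk) (mul_one e) rfl

theorem spinFunctional_X_sq (hjk : j < k) (i : Fin n) :
    spinFunctional c j k (X i ^ 2) = if i = k then c j k else 0 := by
  rw [spinFunctional_apply, X_pow_eq_monomial, coeff_monomial, coeff_monomial,
    if_neg (single_add_single_ne_single_two hjk.ne i).symm]
  simp [Finsupp.single_left_inj two_ne_zero]

theorem spinFunctional_bottIdeal_generator (hjk : j < k) (i : Fin n) :
    spinFunctional c j k (X i ^ 2 - ∑ p ∈ univ.filter (· < i), C (c p i) * (X i * X p)) = 0 := by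
  rw [map_sub, map_sum, spinFunctional_X_sq c hjk, sum_congr rfl fun p hp => by
    rw [mul_comm (X i), spinFunctional_C_mul_X_mul_X c hjk (mem_filter.mp hp).2]]
  by_cases hik : i = k
  · subst hik
    simp [hjk]
  · simp [hik]

theorem spinFunctional_eq_zero_of_mem (hjk : j < k) {x : MvPolynomial (Fin n) (ZMod 2)}
    (hx : x ∈ bottIdeal n c) : spinFunctional c j k x = 0 := by
  suffices ∀ f, spinFunctional c j k (f * x) = 0 by simpa using this 1
  induction hx using Submodule.span_induction with
  | mem g hg =>
    obtain ⟨i, rfl⟩ := hg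
    intro f
    rw [spinFunctional_mul_of_isHomogeneous c (isHomogeneous_bottIdeal_generator c i),
      spinFunctional_bottIdeal_generator c hjk, mul_zero]
  | zero => simp
  | add x y _ _ hx hy => intro f; rw [mul_add, map_add, hx, hy, add_zero]
  | smul a x _ hx => intro f; rw [smul_eq_mul, ← mul_assoc, hx]

theorem spinFunctional_sum_C_mul_X_mul_X (hjk : j < k) (hk : k.val + 2 < n)
    (e : Fin n → Fin n → ZMod 2) :
    spinFunctional c j k (∑ j', ∑ k' ∈ univ.filter (fun k' => j' < k' ∧ k'.val + 2 < n),
      C (e j' k') * (X j' * X k')) = e j k := by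
  simp only [map_sum]
  rw [sum_congr rfl fun j' _ => sum_congr rfl fun k' hk' =>
    spinFunctional_C_mul_X_mul_X c hjk (mem_filter.mp hk').2.1 _]
  simp [ite_and, hjk, hk]

def IsOrientable (c : Fin n → Fin n → ZMod 2) : Prop :=
  ∀ i : Fin n, ∑ j ∈ univ.filter (i < ·), c i j = 0

variable {c}

theorem IsOrientable.apply_eq_zero_of_le (horient : IsOrientable c) {k s : Fin n}
    (hk : n ≤ k.val + 2) (hks : k < s) : c k s = 0 := by
  have h_single : univ.filter (k < ·) = {s} := by
    ext r
    simp only [mem_filter, mem_univ, true_and, mem_singleton, Fin.lt_def, Fin.ext_iff] at hks ⊢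
    omega
  simpa [h_single] using horient k

theorem IsOrientable.spinCoeff_eq_zero_of_le (horient : IsOrientable c) {j k : Fin n}
    (hk : n ≤ k.val + 2) : spinCoeff n c j k = 0 := by
  have h_cross : crossSum c j k = 0 := sum_eq_zero fun r _ => sum_eq_zero fun s hs => by
    rw [horient.apply_eq_zero_of_le hk (mem_filter.mp hs).2.1, mul_zero]
  have h_row : rowPairSum c k = 0 := sum_eq_zero fun r hr => sum_eq_zero fun s _ => by
    rw [horient.apply_eq_zero_of_le hk (mem_filter.mp hr).2, zero_mul]
  rw [spinCoeff_eq_crossSum_add, h_cross, h_row, mul_zero, add_zero]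

theorem IsOrientable.sum_spinCoeff_eq_sum_filter (horient : IsOrientable c) :
    ∑ j, ∑ k ∈ univ.filter (j < ·), C (spinCoeff n c j k) * (X j * X k) =
      ∑ j, ∑ k ∈ univ.filter (fun k => j < k ∧ k.val + 2 < n),
        C (spinCoeff n c j k) * (X j * X k) := by
  refine sum_congr rfl fun j _ => ?_
  rw [← filter_filter]
  refine (sum_filter_of_ne fun k _ hne => ?_).symm
  by_contra hk
  rw [horient.spinCoeff_eq_zero_of_le (by omega), map_zero, zero_mul] at hne
  exact hne rfl

end Bott

/-- Spin criterion for an orientable real Bott tower: under orientability,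
`w₂` equals the displayed combination of the basis monomials `y_j y_k`
(`1 ≤ j < k ≤ n-2`), and it vanishes iff all its coefficients vanish. -/
theorem stmt_12 (n : ℕ) (c : Fin n → Fin n → ZMod 2)
    (horient : ∀ i : Fin n, (∑ j ∈ Finset.univ.filter (fun j => i < j), c i j) = 0) :
    Ideal.Quotient.mk (bottIdeal n c)
        (MvPolynomial.homogeneousComponent 2 (bottSW n c)) =
      Ideal.Quotient.mk (bottIdeal n c)
        (∑ j : Fin n, ∑ k ∈ Finset.univ.filter (fun k => j < k ∧ k.val + 2 < n),
          C (spinCoeff n c j k) * (X j * X k)) ∧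
    (Ideal.Quotient.mk (bottIdeal n c)
        (MvPolynomial.homogeneousComponent 2 (bottSW n c)) = 0 ↔
      ∀ j k : Fin n, j < k → k.val + 2 < n → spinCoeff n c j k = 0) := by
  have h_w2 := (mk_homogeneousComponent_two_bottSW c).trans
    (congrArg _ (IsOrientable.sum_spinCoeff_eq_sum_filter horient))
  refine ⟨h_w2, ?_⟩
  rw [h_w2, Ideal.Quotient.eq_zero_iff_mem]
  constructor
  · intro h_mem j k hjk hk
    rw [← spinFunctional_sum_C_mul_X_mul_X c hjk hk (spinCoeff n c)]
    exact spinFunctional_eq_zero_of_mem c hjk h_mem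
  · intro h_coeff
    refine sum_mem fun j _ => sum_mem fun k hk => ?_
    obtain ⟨hjk, hk⟩ := (mem_filter.mp hk).2
    rw [h_coeff j k hjk hk, map_zero, zero_mul]
    exact zero_mem _
end

section
/- Let R = (ZMod 2)[y_1,…,y_n] with ideal I generated by y_i^2 - Σ_{j<i} c_{j,i} y_i y_j. Every monomial of degree n in y_1,…,y_{n-1} is zero in R/I. Consequently, for w = Π_{j=2}^n (1 + Σ_{i<j} c_{i,j} y_i), every product w_{1}^{r_1} ⋯ w_{n}^{r_n} with Σ i·r_i = n of homogeneous components of w is zero in degree n. -/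
open MvPolynomial

namespace BottAux

/-- The monomial with exponent vector `d`. -/
noncomputable def M (n : ℕ) (d : Fin n → ℕ) : MvPolynomial (Fin n) (ZMod 2) :=
  monomial (Finsupp.equivFunOnFinite.symm d) 1

lemma prod_X_pow_eq {n : ℕ} (d : Fin n → ℕ) : (∏ i, X i ^ d i) = M n d := by
  rw [M, monomial_eq, map_one, one_mul, Finsupp.prod_fintype _ _ (fun i => pow_zero _)]
  exact Finset.prod_congr rfl fun i _ => by simp

lemma M_mul {n : ℕ} (d e : Fin n → ℕ) : M n d * M n e = M n (d + e) := by
  rw [M, M, M, monomial_mul, one_mul]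
  have h : Finsupp.equivFunOnFinite.symm d + Finsupp.equivFunOnFinite.symm e =
      Finsupp.equivFunOnFinite.symm (d + e) := by
    ext k; simp
  rw [h]

lemma X_pow_eq {n : ℕ} (i : Fin n) (m : ℕ) :
    (X i : MvPolynomial (Fin n) (ZMod 2)) ^ m = M n (fun k => if k = i then m else 0) := by
  rw [X_pow_eq_monomial, M]
  have h : Finsupp.equivFunOnFinite.symm (fun k => if k = i then m else 0) =
      Finsupp.single i m := by
    ext k
    by_cases h : k = i
    · simp [h, Finsupp.single_apply]
    · simp [h, Finsupp.single_apply, Ne.symm h]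
  rw [h]

/-- Key reduction: every monomial of degree `n` avoiding the last variable dies in `R/I`. -/
lemma key (n : ℕ) (hn : 1 ≤ n) (c : Fin n → Fin n → ZMod 2) :
    ∀ d : Fin n → ℕ, (∑ i, d i) = n → (∀ i : Fin n, i.val + 1 = n → d i = 0) →
      Ideal.Quotient.mk (bottIdeal n c) (M n d) = 0 := by
  suffices H : ∀ W, ∀ d : Fin n → ℕ, (∑ i, d i * 2 ^ i.val) = W → (∑ i, d i) = n →
      (∀ i : Fin n, i.val + 1 = n → d i = 0) →
      Ideal.Quotient.mk (bottIdeal n c) (M n d) = 0 from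
    fun d h1 h2 => H _ d rfl h1 h2
  intro W
  induction W using Nat.strong_induction_on with
  | _ W IH =>
  intro d hW hsum hlast
  by_cases hex : ∃ i, 2 ≤ d i
  · obtain ⟨i, hi⟩ := hex
    have hiv : i.val + 1 < n := by
      rcases lt_or_eq_of_le (Nat.succ_le_of_lt i.isLt) with h | h
      · exact h
      · exact absurd (hlast i h) (by omega)
    set d' : Fin n → ℕ := fun k => if k = i then d i - 2 else d k with hd'
    have hdec : M n d = X i ^ 2 * M n d' := by
      rw [X_pow_eq, M_mul]
      congr 1
      funext k
      by_cases h : k = i <;> simp [hd', h, Pi.add_apply] <;> omega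
    have hgen : Ideal.Quotient.mk (bottIdeal n c) ((X i : MvPolynomial (Fin n) (ZMod 2)) ^ 2) =
        Ideal.Quotient.mk (bottIdeal n c)
          (∑ j ∈ Finset.univ.filter (fun j => j < i), C (c j i) * (X i * X j)) := by
      rw [Ideal.Quotient.eq]
      exact Ideal.subset_span ⟨i, rfl⟩
    rw [hdec, map_mul, hgen, ← map_mul, Finset.sum_mul, map_sum]
    apply Finset.sum_eq_zero
    intro j hj
    have hji : j < i := by simpa using hj
    have hjne : j ≠ i := ne_of_lt hji
    set e : Fin n → ℕ := fun k => if k = j then d j + 1 else if k = i then d i - 1 else d k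
      with he
    have hXX : (X i * X j : MvPolynomial (Fin n) (ZMod 2)) * M n d' = M n e := by
      rw [show (X i : MvPolynomial (Fin n) (ZMod 2)) = X i ^ 1 from (pow_one _).symm,
        show (X j : MvPolynomial (Fin n) (ZMod 2)) = X j ^ 1 from (pow_one _).symm,
        X_pow_eq, X_pow_eq, M_mul, M_mul]
      congr 1
      funext k
      by_cases h1 : k = j
      · subst h1; simp [he, hd', hjne, Pi.add_apply]; omega
      · by_cases h2 : k = i
        · subst h2; simp [he, hd', hjne.symm, h1, Pi.add_apply]; omega
        · simp [he, hd', h1, h2, Pi.add_apply]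
    have hmke : Ideal.Quotient.mk (bottIdeal n c) (M n e) = 0 := by
      have hsplit : ∀ f : Fin n → ℕ, (∑ k, f k * 2 ^ k.val) =
          f j * 2 ^ j.val + (f i * 2 ^ i.val +
            ∑ k ∈ (Finset.univ.erase j).erase i, f k * 2 ^ k.val) := by
        intro f
        rw [← Finset.add_sum_erase _ _ (Finset.mem_univ j),
          ← Finset.add_sum_erase _ _ (Finset.mem_erase.mpr ⟨hjne.symm, Finset.mem_univ i⟩)]
      have hsplit' : ∀ f : Fin n → ℕ, (∑ k, f k) =
          f j + (f i + ∑ k ∈ (Finset.univ.erase j).erase i, f k) := by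
        intro f
        rw [← Finset.add_sum_erase _ _ (Finset.mem_univ j),
          ← Finset.add_sum_erase _ _ (Finset.mem_erase.mpr ⟨hjne.symm, Finset.mem_univ i⟩)]
      have hcongrW : ∑ k ∈ (Finset.univ.erase j).erase i, e k * 2 ^ k.val =
          ∑ k ∈ (Finset.univ.erase j).erase i, d k * 2 ^ k.val := by
        apply Finset.sum_congr rfl
        intro k hk
        simp only [Finset.mem_erase] at hk
        simp [he, hk.1, hk.2.1]
      have hcongrS : ∑ k ∈ (Finset.univ.erase j).erase i, e k =
          ∑ k ∈ (Finset.univ.erase j).erase i, d k := by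
        apply Finset.sum_congr rfl
        intro k hk
        simp only [Finset.mem_erase] at hk
        simp [he, hk.1, hk.2.1]
      have hej : e j = d j + 1 := by simp [he]
      have hei : e i = d i - 1 := by simp [he, hjne.symm]
      have hpow : 2 ^ j.val < 2 ^ i.val :=
        Nat.pow_lt_pow_right (by norm_num) hji
      have hWlt : (∑ k, e k * 2 ^ k.val) < W := by
        rw [hsplit e, hcongrW, hej, hei, ← hW, hsplit d]
        have hb : 2 ^ i.val ≤ d i * 2 ^ i.val := Nat.le_mul_of_pos_left _ (by omega)
        have h1 : (d j + 1) * 2 ^ j.val = d j * 2 ^ j.val + 2 ^ j.val := by ring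
        have h2 : (d i - 1) * 2 ^ i.val = d i * 2 ^ i.val - 2 ^ i.val := Nat.sub_one_mul _ _
        omega
      have hesum : (∑ k, e k) = n := by
        have hs2 := hsum
        rw [hsplit' d] at hs2
        rw [hsplit' e, hcongrS, hej, hei]
        omega
      have helast : ∀ k : Fin n, k.val + 1 = n → e k = 0 := by
        intro k hk
        have hji' : (j : ℕ) < i.val := hji
        have hkj : k ≠ j := by
          intro hEq
          have : (k : ℕ) = j.val := by rw [hEq]
          omega
        have hki : k ≠ i := by
          intro hEq
          have : (k : ℕ) = i.val := by rw [hEq]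
          omega
        simp [he, hkj, hki]
        exact hlast k hk
      exact IH _ hWlt e rfl hesum helast
    calc Ideal.Quotient.mk (bottIdeal n c) (C (c j i) * (X i * X j) * M n d')
        = Ideal.Quotient.mk (bottIdeal n c) (C (c j i)) *
          Ideal.Quotient.mk (bottIdeal n c) (M n e) := by
          rw [mul_assoc, hXX, map_mul]
      _ = 0 := by rw [hmke, mul_zero]
  · exfalso
    push_neg at hex
    obtain ⟨i0, hi0⟩ : ∃ i0 : Fin n, i0.val = n - 1 := ⟨⟨n - 1, by omega⟩, rfl⟩
    have hd0 : d i0 = 0 := hlast i0 (by omega)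
    have h1 : (∑ k, d k) = ∑ k ∈ Finset.univ.erase i0, d k := by
      rw [← Finset.add_sum_erase _ _ (Finset.mem_univ i0), hd0, zero_add]
    have h2 : ∑ k ∈ Finset.univ.erase i0, d k ≤ (Finset.univ.erase i0).card • 1 :=
      Finset.sum_le_card_nsmul _ _ 1 (fun k _ => Nat.lt_succ_iff.mp (hex k))
    rw [Finset.card_erase_of_mem (Finset.mem_univ _), Finset.card_univ, Fintype.card_fin,
      smul_eq_mul, mul_one] at h2
    omega

lemma vars_homogeneousComponent_subset {n : ℕ} (m : ℕ) (q : MvPolynomial (Fin n) (ZMod 2)) :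
    (homogeneousComponent m q).vars ⊆ q.vars := by
  intro x hx
  rw [mem_vars] at hx ⊢
  obtain ⟨dd, hdd, hxdd⟩ := hx
  refine ⟨dd, ?_, hxdd⟩
  rw [mem_support_iff] at hdd ⊢
  rw [coeff_homogeneousComponent] at hdd
  intro h
  apply hdd
  split <;> simp [h]

lemma vars_bottSW {n : ℕ} (c : Fin n → Fin n → ZMod 2) :
    ∀ k ∈ (bottSW n c).vars, k.val + 2 ≤ n := by
  intro k hk
  rw [bottSW] at hk
  have h1 := vars_prod (s := Finset.univ.filter (fun j : Fin n => 0 < j.val))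
    (fun j => (1 + ∑ i ∈ Finset.univ.filter (fun i => i < j), C (c i j) * X i)) hk
  rw [Finset.mem_biUnion] at h1
  obtain ⟨j, hj, hkj⟩ := h1
  have h2 := vars_add_subset 1
    (∑ i ∈ Finset.univ.filter (fun i => i < j), C (c i j) * X i) hkj
  rw [vars_one] at h2
  simp only [Finset.empty_union] at h2
  have h3 := vars_sum_subset (Finset.univ.filter (fun i => i < j))
    (fun i => C (c i j) * X i) h2
  rw [Finset.mem_biUnion] at h3
  obtain ⟨i, hi, hki⟩ := h3
  have h4 := vars_mul (C (c i j)) (X i) hki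
  rw [vars_C, vars_X] at h4
  simp only [Finset.empty_union, Finset.mem_singleton] at h4
  subst h4
  simp only [Finset.mem_filter] at hi
  have : (k : ℕ) < j.val := hi.2
  have : (j : ℕ) < n := j.isLt
  omega

end BottAux

open BottAux in
/-- Every monomial of degree `n` in the first `n-1` variables vanishes in `R/I`;
consequently every Stiefel–Whitney number `w_1^{r_1} ⋯ w_n^{r_n}`
(with `∑ i·r_i = n`) of the real Bott tower vanishes. -/
theorem stmt_13 (n : ℕ) (hn : 1 ≤ n) (c : Fin n → Fin n → ZMod 2) :
    (∀ d : Fin n → ℕ, (∑ i, d i) = n → (∀ i : Fin n, i.val + 1 = n → d i = 0) →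
      Ideal.Quotient.mk (bottIdeal n c) (∏ i, X i ^ d i) = 0) ∧
    (∀ r : Fin n → ℕ, (∑ i : Fin n, (i.val + 1) * r i) = n →
      (∏ i : Fin n,
        (Ideal.Quotient.mk (bottIdeal n c)
          (MvPolynomial.homogeneousComponent (i.val + 1) (bottSW n c))) ^ r i) = 0) := by
  constructor
  · intro d h1 h2
    rw [prod_X_pow_eq]
    exact key n hn c d h1 h2
  · intro r hr
    set p := ∏ i : Fin n, (homogeneousComponent (i.val + 1) (bottSW n c)) ^ r i with hp
    have hmk : (∏ i : Fin n,
        (Ideal.Quotient.mk (bottIdeal n c)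
          (homogeneousComponent (i.val + 1) (bottSW n c))) ^ r i) =
        Ideal.Quotient.mk (bottIdeal n c) p := by
      rw [hp, map_prod]
      exact Finset.prod_congr rfl fun i _ => (map_pow _ _ _).symm
    rw [hmk]
    have hhom : p.IsHomogeneous n := by
      have h := MvPolynomial.IsHomogeneous.prod Finset.univ
        (fun i : Fin n => (homogeneousComponent (i.val + 1) (bottSW n c)) ^ r i)
        (fun i : Fin n => (i.val + 1) * r i)
        (fun i _ => (homogeneousComponent_isHomogeneous (i.val + 1) (bottSW n c)).pow (r i))
      rw [hr] at h
      exact h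
    have hpvars : ∀ k ∈ p.vars, k.val + 2 ≤ n := by
      intro k hk
      apply vars_bottSW c
      have h1 := vars_prod
        (s := (Finset.univ : Finset (Fin n)))
        (fun i => (homogeneousComponent (i.val + 1) (bottSW n c)) ^ r i) hk
      rw [Finset.mem_biUnion] at h1
      obtain ⟨i, _, hki⟩ := h1
      exact vars_homogeneousComponent_subset _ _ (vars_pow _ _ hki)
    have hsupp : ∀ v ∈ p.support, ∀ k : Fin n, k.val + 1 = n → v k = 0 := by
      intro v hv k hk
      by_contra h
      have hkv : k ∈ p.vars := (mem_vars k).mpr ⟨v, hv, Finsupp.mem_support_iff.mpr h⟩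
      have := hpvars k hkv
      omega
    conv_lhs => rw [p.as_sum]
    rw [map_sum]
    apply Finset.sum_eq_zero
    intro v hv
    have hdeg : v.degree = n := by
      by_contra hne
      exact (mem_support_iff.mp hv) (hhom.coeff_eq_zero hne)
    have hsum : (∑ i, v i) = n := by
      have hds : v.degree = ∑ i, v i :=
        Finset.sum_subset (Finset.subset_univ _)
          (fun i _ hi => Finsupp.notMem_support_iff.mp hi)
      rw [← hds]
      exact hdeg
    have hM : (monomial v (coeff v p) : MvPolynomial (Fin n) (ZMod 2)) =
        C (coeff v p) * M n (v : Fin n → ℕ) := by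
      rw [M, Finsupp.equivFunOnFinite_symm_coe, C_mul_monomial, mul_one]
    rw [hM, map_mul, key n hn c _ hsum (hsupp v hv), mul_zero]
end

section
/- Let A be the abelian group presented by generators ᾱ_1,…,ᾱ_n with relations ᾱ_q^2 = 0 for exactly those q such that there exists p < q with c_{p,q} = 1. If r is the number of such indices q, then A ≅ ℤ^{n-r} × (ℤ/2)^r. -/
/-!
Reduce each coordinate off `S` to itself and each coordinate in `S` modulo `m`. This map
`ℤ^ι → ℤ^(ι ∖ S) × (ℤ/m)^S` is onto, and its kernel consists of the vectors vanishing off `S`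
with entries in `mℤ` on `S`, which is exactly the subgroup generated by the relations `m • eᵢ`,
`i ∈ S`. The first isomorphism theorem then presents the quotient as `ℤ^(ι ∖ S) × (ℤ/m)^S`.
-/

/-- The set of indices `q` admitting some `p < q` with Bott number `c p q = 1`. -/
def torsionIdx (n : ℕ) (c : Fin n → Fin n → ZMod 2) : Finset (Fin n) :=
  Finset.univ.filter (fun q => ∃ p, p < q ∧ c p q = 1)

/-- `H₁(Y(C); ℤ)`: the abelian group on generators `ᾱ_1, …, ᾱ_n` with relations
`2ᾱ_q = 0` exactly for `q ∈ torsionIdx n c`. -/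
def bottH1 (n : ℕ) (c : Fin n → Fin n → ZMod 2) : Type :=
  (Fin n → ℤ) ⧸ AddSubgroup.closure
    {x : Fin n → ℤ | ∃ q ∈ torsionIdx n c, x = 2 • Pi.single q 1}

instance (n : ℕ) (c : Fin n → Fin n → ZMod 2) : AddCommGroup (bottH1 n c) :=
  QuotientAddGroup.Quotient.addCommGroup _

open QuotientAddGroup

namespace Int

variable {ι : Type*} (S : Finset ι) (m : ℕ)

def restrictCast : (ι → ℤ) →+ ({i // i ∉ S} → ℤ) × (S → ZMod m) where
  toFun x := (fun i => x i, fun i => (x i : ZMod m))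
  map_zero' := by ext <;> simp
  map_add' x y := by ext <;> simp

theorem restrictCast_surjective [DecidableEq ι] : Function.Surjective (restrictCast S m) := by
  rintro ⟨a, b⟩
  refine ⟨fun i => if h : i ∈ S then ((b ⟨i, h⟩).cast : ℤ) else a ⟨i, h⟩, ?_⟩
  ext i
  · simp [restrictCast, i.2]
  · simp [restrictCast, ZMod.intCast_cast, ZMod.cast_id]

theorem closure_smul_single_eq_ker_restrictCast [Fintype ι] [DecidableEq ι] :
    AddSubgroup.closure {x : ι → ℤ | ∃ q ∈ S, x = m • Pi.single q 1} =
      (restrictCast S m).ker := by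
  apply le_antisymm
  · rw [AddSubgroup.closure_le]
    rintro _ ⟨q, hq, rfl⟩
    refine (restrictCast S m).mem_ker.mpr (Prod.ext (funext fun i => ?_) (funext fun i => ?_))
    · have hiq : i.1 ≠ q := fun h => i.2 (h ▸ hq)
      simp [restrictCast, Pi.single_eq_of_ne hiq]
    · simp [restrictCast]
  · intro x hx
    have hoff : ∀ i, i ∉ S → x i = 0 := fun i hi => congrFun (congrArg Prod.fst hx) ⟨i, hi⟩
    have hon : ∀ i ∈ S, (m : ℤ) ∣ x i := fun i hi =>
      (ZMod.intCast_zmod_eq_zero_iff_dvd _ m).mp (congrFun (congrArg Prod.snd hx) ⟨i, hi⟩)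
    rw [← Finset.univ_sum_single x]
    refine AddSubgroup.sum_mem _ fun i _ => ?_
    by_cases hi : i ∈ S
    · obtain ⟨k, hk⟩ := hon i hi
      have hsingle : Pi.single i (x i) = k • m • (Pi.single i 1 : ι → ℤ) := by
        ext j
        rcases eq_or_ne j i with rfl | hj
        · simp [hk, mul_comm]
        · simp [hj]
      rw [hsingle]
      exact AddSubgroup.zsmul_mem _ (AddSubgroup.subset_closure (by exact ⟨i, hi, rfl⟩)) k
    · rw [hoff i hi, Pi.single_zero]
      exact zero_mem _

noncomputable def quotientClosureSmulSingleEquiv [Fintype ι] [DecidableEq ι] :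
    (ι → ℤ) ⧸ AddSubgroup.closure {x : ι → ℤ | ∃ q ∈ S, x = m • Pi.single q 1} ≃+
      ({i // i ∉ S} → ℤ) × (S → ZMod m) :=
  (quotientAddEquivOfEq (closure_smul_single_eq_ker_restrictCast S m)).trans
    (quotientKerEquivOfSurjective _ (restrictCast_surjective S m))

end Int

theorem stmt_15 (n : ℕ) (c : Fin n → Fin n → ZMod 2) :
    Nonempty (bottH1 n c ≃+
      ((Fin (n - (torsionIdx n c).card) → ℤ) × (Fin ((torsionIdx n c).card) → ZMod 2))) := by
  set S := torsionIdx n c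
  have hfree : {i // i ∉ S} ≃ Fin (n - S.card) :=
    Fintype.equivFinOfCardEq (by simp)
  have htors : S ≃ Fin S.card := Fintype.equivFinOfCardEq (by simp)
  exact ⟨(Int.quotientClosureSmulSingleEquiv S 2).trans
    ((AddEquiv.arrowCongr hfree (.refl ℤ)).prodCongr (AddEquiv.arrowCongr htors (.refl _)))⟩
end
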